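/- arXiv:2506.03815 — 8 statements merged into one kernel-verified Lean document; each statement's English description precedes it below -/
import Mathlib

section
/- Let p ≥ 1 and m ≥ 2 be integers and let D_SG(m) = {i/(m−1) : i = 0, 1, …, m−1}^p be the static grid design with m^p points. Then for every monotone function f ∈ Ω, the volume of the uncertain region satisfies V(U(D_SG(m), f)) ≤ 1 − (m−2)^p/(m−1)^p. -/
open MeasureTheory Set

/-- The uncertain region `U(D, f)` on the cube `[0,1]^p`: points not certainly negative
(below a design point with negative outcome) nor certainly positive. -/
def uncertainRegion (p : ℕ) (D : Set (Fin p → ℝ)) (f : (Fin p → ℝ) → ℝ) :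
    Set (Fin p → ℝ) :=
  Icc 0 1 \ ((⋃ x ∈ {y ∈ D | f y = -1}, Icc (0 : Fin p → ℝ) x) ∪
             (⋃ x ∈ {y ∈ D | f y = 1}, Icc x (1 : Fin p → ℝ)))

/-- `Ω`: monotone `{-1,1}`-valued functions on the cube `[0,1]^p`. -/
def OmegaSet (p : ℕ) : Set ((Fin p → ℝ) → ℝ) :=
  {f | MonotoneOn f (Icc 0 1) ∧ ∀ x ∈ Icc (0 : Fin p → ℝ) 1, f x = -1 ∨ f x = 1}

/-- The static grid design `D_SG(m) = {i/(m-1) : i = 0, …, m-1}^p`. -/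
def staticGrid (p m : ℕ) : Set (Fin p → ℝ) :=
  {x | ∀ k, ∃ i : ℕ, i < m ∧ x k = (i : ℝ) / ((m : ℝ) - 1)}
/-!
Cut the cube into the `(m-1)^p` half-open cells `∏ₖ (jₖ/(m-1), (jₖ+1)/(m-1)]` spanned by the grid.
Off the null set of faces `xₖ = 0`, a point of the uncertain region lies in a cell whose lowest
corner has label `-1` and whose highest corner has label `1`; by monotonicity no two such cells are
strictly comparable in every coordinate. Sliding each cell down the diagonal until it touches a face
`jₖ = 0` is therefore injective on them, so there are at most `(m-1)^p - (m-2)^p` of them, each of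
volume `(m-1)^(-p)`.
-/

open Fintype

section Combinatorics

open Finset

variable {ι : Type*}

noncomputable def diagonalBase (j : ι → ℕ) : ι → ℕ := j - fun _ => ⨅ k, j k

theorem diagonalBase_le (j : ι → ℕ) : diagonalBase j ≤ j := tsub_le_self

theorem diagonalBase_add_iInf (j : ι → ℕ) : diagonalBase j + (fun _ => ⨅ k, j k) = j :=
  tsub_add_cancel_of_le fun k => ciInf_le (OrderBot.bddBelow _) k

theorem exists_diagonalBase_eq_zero [Nonempty ι] [Finite ι] (j : ι → ℕ) :
    ∃ k, diagonalBase j k = 0 := by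
  obtain ⟨k, hk⟩ := exists_eq_ciInf_of_finite (f := j)
  exact ⟨k, by simp [diagonalBase, hk]⟩

theorem injOn_diagonalBase {S : Set (ι → ℕ)}
    (hS : ∀ j ∈ S, ∀ j' ∈ S, ¬ StrongLT j j') : InjOn diagonalBase S := by
  intro j hj j' hj' h
  have hj_eq := diagonalBase_add_iInf j
  have hj'_eq := diagonalBase_add_iInf j'
  rw [h] at hj_eq
  generalize ⨅ k, j k = t at hj_eq
  generalize ⨅ k, j' k = t' at hj'_eq
  have key : ∀ k, j k + t' = j' k + t := fun k => by
    have h₁ := congrFun hj_eq k; have h₂ := congrFun hj'_eq k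
    simp only [Pi.add_apply] at h₁ h₂; omega
  rcases lt_trichotomy t t' with hlt | heq | hgt
  · have hlt' : ∀ k, j k < j' k := fun k => by have := key k; omega
    exact (hS j hj j' hj' hlt').elim
  · funext k; have := key k; omega
  · have hgt' : ∀ k, j' k < j k := fun k => by have := key k; omega
    exact (hS j' hj' j hj hgt').elim

variable [Fintype ι] [DecidableEq ι]

theorem card_filter_exists_eq_zero_add_pow (n : ℕ) :
    #{j ∈ piFinset fun _ : ι => range (n + 1) | ∃ k, j k = 0} + n ^ card ι
      = (n + 1) ^ card ι := by
  have hpos : {j ∈ piFinset fun _ : ι => range (n + 1) | ¬ ∃ k, j k = 0}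
      = piFinset fun _ => Ioc 0 n := by
    ext j; simp [Nat.pos_iff_ne_zero, forall_and, and_comm]
  have := card_filter_add_card_filter_not (s := piFinset fun _ : ι => range (n + 1))
    (fun j => ∃ k, j k = 0)
  rw [hpos] at this
  simpa using this

theorem card_add_pow_le_of_forall_not_strongLT [Nonempty ι] {n : ℕ} {S : Finset (ι → ℕ)}
    (hS : S ⊆ piFinset fun _ => range (n + 1)) (hanti : ∀ j ∈ S, ∀ j' ∈ S, ¬ StrongLT j j') :
    #S + n ^ card ι ≤ (n + 1) ^ card ι := by
  rw [← card_filter_exists_eq_zero_add_pow]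
  refine Nat.add_le_add_right
    (card_le_card_of_injOn diagonalBase (fun j hj => ?_) (injOn_diagonalBase hanti)) _
  have hj := mem_piFinset.1 (hS hj)
  refine mem_filter.2 ⟨mem_piFinset.2 fun k => ?_, exists_diagonalBase_eq_zero j⟩
  exact mem_range.2 ((diagonalBase_le j k).trans_lt (mem_range.1 (hj k)))

end Combinatorics

section Grid

variable {ι : Type*}

noncomputable def gridPoint (N : ℕ) (j : ι → ℕ) : ι → ℝ := fun k => j k / N

def gridCell (N : ℕ) (j : ι → ℕ) : Set (ι → ℝ) :=
  pi univ fun k => Ioc (gridPoint N j k) (gridPoint N (j + 1) k)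

theorem gridPoint_mono (N : ℕ) : Monotone (gridPoint (ι := ι) N) := fun _ _ h k =>
  div_le_div_of_nonneg_right (Nat.cast_le.2 (h k)) N.cast_nonneg

theorem gridPoint_mem_Icc {N : ℕ} {j : ι → ℕ} (hj : ∀ k, j k ≤ N) :
    gridPoint N j ∈ Icc 0 1 :=
  ⟨fun _ => div_nonneg (Nat.cast_nonneg _) N.cast_nonneg,
    fun k => div_le_one_of_le₀ (Nat.cast_le.2 (hj k)) N.cast_nonneg⟩

theorem gridPoint_mem_staticGrid {p N : ℕ} {j : Fin p → ℕ} (hj : ∀ k, j k ≤ N) :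
    gridPoint N j ∈ staticGrid p (N + 1) := fun k =>
  ⟨j k, Nat.lt_succ_of_le (hj k), by simp [gridPoint]⟩

theorem exists_mem_Ioc_natCast_div {N : ℕ} (hN : 0 < N) {t : ℝ} (ht₀ : 0 < t) (ht₁ : t ≤ 1) :
    ∃ i < N, t ∈ Ioc ((i : ℝ) / N) ((i + 1 : ℕ) / N) := by
  have hN' : (0 : ℝ) < N := by exact_mod_cast hN
  have hc₀ : 0 < ⌈N * t⌉₊ := Nat.ceil_pos.2 (by positivity)
  have hcN : ⌈N * t⌉₊ ≤ N := Nat.ceil_le.2 (by nlinarith)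
  refine ⟨⌈N * t⌉₊ - 1, by omega, ?_, ?_⟩
  · rw [div_lt_iff₀ hN', Nat.cast_sub hc₀]
    have := Nat.ceil_lt_add_one (mul_pos hN' ht₀).le
    push_cast
    linarith
  · rw [le_div_iff₀ hN', Nat.sub_add_cancel hc₀, mul_comm]
    exact Nat.le_ceil _

theorem exists_mem_gridCell [Fintype ι] [DecidableEq ι] {N : ℕ} (hN : 0 < N) {x : ι → ℝ}
    (hx : x ∈ Icc 0 1) (hpos : ∀ k, 0 < x k) :
    ∃ j ∈ piFinset fun _ => Finset.range N, x ∈ gridCell N j := by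
  choose j hjN hj using fun k => exists_mem_Ioc_natCast_div hN (hpos k) (hx.2 k)
  exact ⟨j, mem_piFinset.2 fun k => Finset.mem_range.2 (hjN k), fun k _ => hj k⟩

theorem volume_gridCell [Fintype ι] (N : ℕ) (j : ι → ℕ) :
    volume (gridCell N j) = ENNReal.ofReal (1 / N) ^ card ι := by
  rw [gridCell, volume_pi_pi]
  simp only [Real.volume_Ioc, gridPoint, Pi.add_apply, Pi.one_apply, Nat.cast_add, Nat.cast_one,
    add_div, add_sub_cancel_left, Finset.prod_const, Finset.card_univ]

noncomputable def uncertainCells [Fintype ι] [DecidableEq ι] (f : (ι → ℝ) → ℝ) (N : ℕ) :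
    Finset (ι → ℕ) :=
  {j ∈ piFinset fun _ => Finset.range N | f (gridPoint N j) = -1 ∧ f (gridPoint N (j + 1)) = 1}

theorem uncertainCells_subset [Fintype ι] [DecidableEq ι] {f : (ι → ℝ) → ℝ} {N : ℕ} :
    uncertainCells f N ⊆ piFinset fun _ => Finset.range N :=
  Finset.filter_subset _ _

theorem not_strongLT_of_mem_uncertainCells [Fintype ι] [DecidableEq ι] {f : (ι → ℝ) → ℝ}
    {N : ℕ} (hf : MonotoneOn f (Icc 0 1)) {j j' : ι → ℕ} (hj : j ∈ uncertainCells f N)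
    (hj' : j' ∈ uncertainCells f N) : ¬ StrongLT j j' := by
  intro hlt
  obtain ⟨hjN, -, hj_up⟩ := Finset.mem_filter.1 hj
  obtain ⟨hj'N, hj'_low, -⟩ := Finset.mem_filter.1 hj'
  have hup : ∀ k, (j + 1) k ≤ N := fun k => Finset.mem_range.1 (mem_piFinset.1 hjN k)
  have hlow : ∀ k, j' k ≤ N := fun k => (Finset.mem_range.1 (mem_piFinset.1 hj'N k)).le
  have := hf (gridPoint_mem_Icc hup) (gridPoint_mem_Icc hlow) (gridPoint_mono N fun k => hlt k)
  rw [hj_up, hj'_low] at this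
  norm_num at this

end Grid

section UncertainRegion

variable {p : ℕ} {D : Set (Fin p → ℝ)} {f : (Fin p → ℝ) → ℝ} {x a : Fin p → ℝ}

theorem ne_one_of_mem_uncertainRegion_of_le (hx : x ∈ uncertainRegion p D f) (ha : a ∈ D)
    (hax : a ≤ x) : f a ≠ 1 := fun h =>
  hx.2 (Or.inr (mem_iUnion₂.2 ⟨a, ⟨ha, h⟩, hax, hx.1.2⟩))

theorem ne_neg_one_of_mem_uncertainRegion_of_le (hx : x ∈ uncertainRegion p D f) (ha : a ∈ D)
    (hxa : x ≤ a) : f a ≠ -1 := fun h =>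
  hx.2 (Or.inl (mem_iUnion₂.2 ⟨a, ⟨ha, h⟩, hx.1.1, hxa⟩))

theorem uncertainRegion_staticGrid_subset (hf : ∀ x ∈ Icc (0 : Fin p → ℝ) 1, f x = -1 ∨ f x = 1)
    {N : ℕ} (hN : 0 < N) :
    uncertainRegion p (staticGrid p (N + 1)) f
      ⊆ (⋃ k, {x | x k = 0}) ∪ ⋃ j ∈ uncertainCells f N, gridCell N j := by
  intro x hx
  by_cases h0 : ∃ k, x k = 0
  · exact Or.inl (mem_iUnion.2 h0)
  simp only [not_exists] at h0
  obtain ⟨j, hjN, hxj⟩ := exists_mem_gridCell hN hx.1 fun k => (hx.1.1 k).lt_of_ne' (h0 k)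
  have hup : ∀ k, (j + 1) k ≤ N := fun k => Finset.mem_range.1 (mem_piFinset.1 hjN k)
  have hlow : ∀ k, j k ≤ N := fun k => (hup k).trans' (Nat.le_succ _)
  have hf_low := (hf _ (gridPoint_mem_Icc hlow)).resolve_right
    (ne_one_of_mem_uncertainRegion_of_le hx (gridPoint_mem_staticGrid hlow)
      fun k => (hxj k (mem_univ k)).1.le)
  have hf_up := (hf _ (gridPoint_mem_Icc hup)).resolve_left
    (ne_neg_one_of_mem_uncertainRegion_of_le hx (gridPoint_mem_staticGrid hup)
      fun k => (hxj k (mem_univ k)).2)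
  exact Or.inr (mem_iUnion₂.2 ⟨j, Finset.mem_filter.2 ⟨hjN, hf_low, hf_up⟩, hxj⟩)

theorem volume_uncertainRegion_staticGrid_le
    (hf : ∀ x ∈ Icc (0 : Fin p → ℝ) 1, f x = -1 ∨ f x = 1) {N : ℕ} (hN : 0 < N) :
    volume (uncertainRegion p (staticGrid p (N + 1)) f)
      ≤ (uncertainCells f N).card * ENNReal.ofReal (1 / N) ^ p := by
  have hnull : volume (⋃ k, {x : Fin p → ℝ | x k = 0}) = 0 :=
    measure_iUnion_null fun k => by rw [volume_pi]; exact Measure.pi_hyperplane _ k 0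
  calc volume (uncertainRegion p (staticGrid p (N + 1)) f)
      ≤ volume ((⋃ k, {x : Fin p → ℝ | x k = 0}) ∪ ⋃ j ∈ uncertainCells f N, gridCell N j) :=
        measure_mono (uncertainRegion_staticGrid_subset hf hN)
    _ ≤ volume (⋃ j ∈ uncertainCells f N, gridCell N j) :=
        (measure_union_le _ _).trans_eq (by rw [hnull, zero_add])
    _ ≤ ∑ j ∈ uncertainCells f N, volume (gridCell N j) := measure_biUnion_finset_le _ _
    _ = (uncertainCells f N).card * ENNReal.ofReal (1 / N) ^ p := by
        simp [volume_gridCell]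

end UncertainRegion

/-- Theorem 1 (upper bound part): for the static grid design with `m^p` points,
every monotone `f` has uncertain volume at most `1 - (m-2)^p/(m-1)^p`. -/
theorem staticGrid_uncertain_volume_le (p m : ℕ) (hp : 1 ≤ p) (hm : 2 ≤ m)
    (f : (Fin p → ℝ) → ℝ) (hf : f ∈ OmegaSet p) :
    volume (uncertainRegion p (staticGrid p m) f)
      ≤ ENNReal.ofReal (1 - ((m : ℝ) - 2) ^ p / ((m : ℝ) - 1) ^ p) := by
  obtain ⟨n, rfl⟩ : ∃ n, m = n + 2 := ⟨m - 2, by omega⟩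
  have : Nonempty (Fin p) := ⟨⟨0, hp⟩⟩
  have hcard := card_add_pow_le_of_forall_not_strongLT uncertainCells_subset
    fun _ hj _ hj' => not_strongLT_of_mem_uncertainCells (N := n + 1) hf.1 hj hj'
  rw [card_fin] at hcard
  refine (volume_uncertainRegion_staticGrid_le hf.2 n.succ_pos).trans ?_
  rw [← ENNReal.ofReal_natCast, ← ENNReal.ofReal_pow (by positivity),
    ← ENNReal.ofReal_mul (Nat.cast_nonneg _)]
  refine ENNReal.ofReal_le_ofReal ?_
  have hcard' : ((uncertainCells f (n + 1)).card : ℝ) + n ^ p ≤ (n + 1) ^ p := by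
    exact_mod_cast hcard
  push_cast
  rw [show (n : ℝ) + 2 - 2 = n by ring, show (n : ℝ) + 2 - 1 = n + 1 by ring, div_pow, one_pow,
    ← div_eq_mul_one_div, le_sub_iff_add_le, ← add_div, div_le_one (by positivity)]
  exact hcard'
end

section
/- Let p = 1 and let D ⊆ [0,1] be any finite set of n points. Then there exists a monotone function f ∈ Ω such that V(U(D, f)) ≥ 1/(n+1); consequently sup_{f ∈ Ω} V(U(D, f)) ≥ 1/(n+1) for every static design D with n points. -/
open MeasureTheory Set
open scoped ENNReal

/-- The uncertain region `U(D, f)` for a design `D ⊆ [0,1]` (case `p = 1`). -/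
def uncertainRegion1 (D : Set ℝ) (f : ℝ → ℝ) : Set ℝ :=
  Icc 0 1 \ ((⋃ x ∈ {y ∈ D | f y = -1}, Icc (0 : ℝ) x) ∪
             (⋃ x ∈ {y ∈ D | f y = 1}, Icc x (1 : ℝ)))

/-- `Ω`: monotone `{-1,1}`-valued functions on `[0,1]`. -/
def Omega1 : Set (ℝ → ℝ) :=
  {f | MonotoneOn f (Icc 0 1) ∧ ∀ x ∈ Icc (0 : ℝ) 1, f x = -1 ∨ f x = 1}

/-!
Cut `[0,1]` into `n + 1` open intervals of length `1/(n+1)`. By pigeonhole one of them,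
`(u, v)`, contains no design point. Take `f = -1` on `(-∞, v)` and `f = 1` on `[v, ∞)`: every
design point with `f = -1` lies at or below `u`, every one with `f = 1` at or above `v`, so the
queries settle nothing inside `(u, v)`, which therefore lies in the uncertain region.
-/

noncomputable def threshold (v : ℝ) (y : ℝ) : ℝ := if y < v then -1 else 1

lemma threshold_mem_Omega1 (v : ℝ) : threshold v ∈ Omega1 := by
  refine ⟨fun x _ y _ hxy => ?_, fun x _ => ?_⟩
  · unfold threshold
    split_ifs with hx hy hy <;> norm_num
    exact hx (hxy.trans_lt hy)
  · unfold threshold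
    split_ifs <;> simp

lemma exists_Ioo_disjoint_of_card_lt (D : Finset ℝ) (a : ℝ) {h : ℝ} (hh : 0 < h) {m : ℕ}
    (hm : D.card < m) :
    ∃ k < m, Disjoint (D : Set ℝ) (Ioo (a + k * h) (a + (k + 1) * h)) := by
  classical
  -- each point of `Ioo (a + k * h) (a + (k + 1) * h)` has cell index `k`
  let cell : ℝ → ℕ := fun x => ⌊(x - a) / h⌋₊
  obtain ⟨k, hk, hfree⟩ := Finset.exists_mem_notMem_of_card_lt_card
    ((Finset.card_image_le (f := cell)).trans_lt (hm.trans_eq (Finset.card_range m).symm))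
  refine ⟨k, Finset.mem_range.mp hk, Set.disjoint_left.mpr fun x hxD hx => hfree ?_⟩
  have hcell : cell x = k := by
    have hlo : (k : ℝ) < (x - a) / h := by rw [lt_div_iff₀ hh]; linarith [hx.1]
    have hhi : (x - a) / h < k + 1 := by rw [div_lt_iff₀ hh]; linarith [hx.2]
    exact (Nat.floor_eq_iff ((Nat.cast_nonneg k).trans hlo.le)).mpr ⟨hlo.le, hhi⟩
  exact Finset.mem_image.mpr ⟨x, hxD, hcell⟩

lemma Ioo_subset_uncertainRegion1_threshold {D : Set ℝ} {u v : ℝ} (hsub : Ioo u v ⊆ Icc 0 1)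
    (hD : Disjoint D (Ioo u v)) : Ioo u v ⊆ uncertainRegion1 D (threshold v) := by
  intro z hz
  refine ⟨hsub hz, ?_⟩
  simp only [mem_union, mem_iUnion, mem_ofPred_eq, exists_prop, mem_Icc, not_or, not_exists,
    not_and]
  constructor
  · rintro x ⟨hxD, hfx⟩ - hzx
    have hxv : x < v := by
      by_contra hxv
      rw [threshold, if_neg hxv] at hfx
      norm_num at hfx
    exact Set.disjoint_left.mp hD hxD ⟨hz.1.trans_le hzx, hxv⟩
  · rintro x ⟨hxD, hfx⟩ hxz -
    have hvx : v ≤ x := by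
      by_contra hxv
      rw [threshold, if_pos (not_le.mp hxv)] at hfx
      norm_num at hfx
    linarith [hz.2]

theorem static_design_lower_bound_dim_one_general (D : Finset ℝ) (n : ℕ)
    (hcard : D.card = n) :
    (∃ f ∈ Omega1, (1 : ℝ≥0∞) / (n + 1) ≤ volume (uncertainRegion1 ↑D f)) ∧
    (1 : ℝ≥0∞) / (n + 1) ≤ ⨆ f ∈ Omega1, volume (uncertainRegion1 ↑D f) := by
  set h : ℝ := 1 / (n + 1)
  have hh : 0 < h := by positivity
  obtain ⟨k, hk, hD⟩ := exists_Ioo_disjoint_of_card_lt D 0 hh (m := n + 1) (by omega)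
  simp only [zero_add] at hD
  set u := k * h
  set v := (k + 1) * h
  have hsub : Ioo u v ⊆ Icc 0 1 := by
    have hk' : (k : ℝ) + 1 ≤ n + 1 := by exact_mod_cast hk
    refine Ioo_subset_Icc_self.trans (Icc_subset_Icc (by positivity) ?_)
    calc v = ((k : ℝ) + 1) / (n + 1) := by simp only [v, h]; ring
      _ ≤ 1 := (div_le_one (by positivity)).mpr hk'
  have hvol : (1 : ℝ≥0∞) / (n + 1) ≤ volume (uncertainRegion1 ↑D (threshold v)) := by
    calc (1 : ℝ≥0∞) / (n + 1) = volume (Ioo u v) := by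
          rw [Real.volume_Ioo, show v - u = h by ring, ENNReal.ofReal_div_of_pos (by positivity)]
          norm_cast
      _ ≤ _ := measure_mono (Ioo_subset_uncertainRegion1_threshold hsub hD)
  exact ⟨⟨_, threshold_mem_Omega1 v, hvol⟩, le_iSup₂_of_le _ (threshold_mem_Omega1 v) hvol⟩

/-- Theorem 2, case `p = 1`: for any static design of `n` points in `[0,1]` there is a
monotone `f` with uncertain volume at least `1/(n+1)`; consequently the supremum over
`Ω` is at least `1/(n+1)`. -/
theorem static_design_lower_bound_dim_one (D : Finset ℝ) (n : ℕ)
    (hD : ↑D ⊆ Icc (0 : ℝ) 1) (hcard : D.card = n) :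
    (∃ f ∈ Omega1, (1 : ℝ≥0∞) / (n + 1) ≤ volume (uncertainRegion1 ↑D f)) ∧
    (1 : ℝ≥0∞) / (n + 1) ≤ ⨆ f ∈ Omega1, volume (uncertainRegion1 ↑D f) :=
  static_design_lower_bound_dim_one_general D n hcard
end

section
/- Let p = 1 and n ≥ 1, and let X_1, …, X_n be independent random points uniformly distributed on [0,1]. Then sup_{f ∈ Ω} E[ V(U({X_1,…,X_n}, f)) ] = (2 − 2^{−n})/(n + 1), and the supremum is attained by the monotone function f(x) = −1 for x < 1/2 and f(x) = 1 for x ≥ 1/2. -/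
open MeasureTheory Set

/-- The uniform distribution on `[0,1]`. -/
noncomputable def unif : Measure ℝ := volume.restrict (Icc 0 1)

/-!
A design point `x` labelled `f x = -1` settles `[0, x]` and one labelled `1` settles `[x, 1]`.
A monotone `f ∈ Ω` is `-1` left of a threshold `t` and `1` right of it, so a uniform sample point
settles a given `s ∈ [0,1]` exactly when it falls between `s` and `t`, which has probability
`|s - t|`. By independence and Fubini the expected uncertain volume is
`∫₀¹ (1 - |s - t|)ⁿ ds = (2 - t^(n+1) - (1-t)^(n+1)) / (n+1)`, which by convexity of
`x ↦ x^(n+1)` is largest at `t = 1/2`.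
-/

instance : IsProbabilityMeasure unif := ⟨by simp [unif, Real.volume_Icc]⟩

def Covers1 (f : ℝ → ℝ) (x s : ℝ) : Prop :=
  (f x = -1 ∧ s ≤ x) ∨ (f x = 1 ∧ x ≤ s)

theorem uncertainRegion1_eq (D : Set ℝ) (f : ℝ → ℝ) :
    uncertainRegion1 D f = Icc 0 1 ∩ {s | ∀ x ∈ D, ¬ Covers1 f x s} := by
  ext s
  simp only [uncertainRegion1, Covers1, mem_sdiff, mem_inter_iff, mem_union, mem_iUnion,
    mem_ofPred_eq, mem_Icc, exists_prop]
  constructor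
  · rintro ⟨hs, hD⟩
    exact ⟨hs, fun x hx hcov => hD (hcov.imp (fun h => ⟨x, ⟨hx, h.1⟩, hs.1, h.2⟩)
      (fun h => ⟨x, ⟨hx, h.1⟩, h.2, hs.2⟩))⟩
  · rintro ⟨hs, hD⟩
    refine ⟨hs, ?_⟩
    rintro (⟨x, ⟨hx, hfx⟩, -, hsx⟩ | ⟨x, ⟨hx, hfx⟩, hxs, -⟩)
    exacts [hD x hx (Or.inl ⟨hfx, hsx⟩), hD x hx (Or.inr ⟨hfx, hxs⟩)]

theorem uncertainRegion1_subset {D : Set ℝ} {f g : ℝ → ℝ}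
    (hneg : ∀ x ∈ D, g x = -1 → f x = -1) (hpos : ∀ x ∈ D, g x = 1 → f x = 1) :
    uncertainRegion1 D f ⊆ uncertainRegion1 D g := by
  rw [uncertainRegion1_eq, uncertainRegion1_eq]
  exact inter_subset_inter_right _ fun s hs x hx hcov =>
    hs x hx (hcov.imp (And.imp_left (hneg x hx)) (And.imp_left (hpos x hx)))

theorem measurableSet_covers1 {f : ℝ → ℝ} (hf : Measurable f) :
    MeasurableSet {p : ℝ × ℝ | Covers1 f p.1 p.2} := by
  have hfst : Measurable fun p : ℝ × ℝ => f p.1 := hf.comp measurable_fst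
  exact ((measurableSet_eq_fun hfst measurable_const).inter
      (measurableSet_le measurable_snd measurable_fst)).union
    ((measurableSet_eq_fun hfst measurable_const).inter
      (measurableSet_le measurable_fst measurable_snd))

theorem lintegral_measure_forall_notMem_pi {ι α β : Type*} [Fintype ι] [MeasurableSpace α]
    [MeasurableSpace β] (μ : Measure α) [SigmaFinite μ] (ν : Measure β) [SFinite ν]
    {K : Set (α × β)} (hK : MeasurableSet K) :
    ∫⁻ ω : ι → α, ν {s | ∀ i, (ω i, s) ∉ K} ∂(Measure.pi fun _ => μ)
      = ∫⁻ s, μ {x | (x, s) ∉ K} ^ Fintype.card ι ∂ν := by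
  set S : Set ((ι → α) × β) := {p | ∀ i, (p.1 i, p.2) ∉ K}
  have hS : MeasurableSet S := by
    simp only [S, ofPred_forall]
    exact MeasurableSet.iInter fun i =>
      (hK.preimage (((measurable_pi_apply i).comp measurable_fst).prodMk measurable_snd)).compl
  have hslice : ∀ s : β, (fun ω => (ω, s)) ⁻¹' S = univ.pi fun _ => {x | (x, s) ∉ K} := by
    intro s; ext ω; simp [S]
  calc ∫⁻ ω, ν {s | ∀ i, (ω i, s) ∉ K} ∂(Measure.pi fun _ => μ)
      = ((Measure.pi fun _ => μ).prod ν) S := (Measure.prod_apply hS).symm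
    _ = ∫⁻ s, μ {x | (x, s) ∉ K} ^ Fintype.card ι ∂ν := by
      simp only [Measure.prod_apply_symm hS, hslice, Measure.pi_pi, Finset.prod_const,
        Finset.card_univ]

theorem lintegral_volume_uncertainRegion1 {f : ℝ → ℝ} (hf : Measurable f) (n : ℕ) :
    ∫⁻ ω : Fin n → ℝ, volume (uncertainRegion1 (range ω) f) ∂(Measure.pi fun _ => unif)
      = ∫⁻ s, unif {x | ¬ Covers1 f x s} ^ n ∂unif := by
  have hvol : ∀ ω : Fin n → ℝ, volume (uncertainRegion1 (range ω) f)
      = unif {s | ∀ i, (ω i, s) ∉ {p : ℝ × ℝ | Covers1 f p.1 p.2}} := by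
    intro ω
    rw [uncertainRegion1_eq, unif, Measure.restrict_apply' measurableSet_Icc, inter_comm]
    simp only [forall_mem_range, mem_ofPred_eq]
  rw [lintegral_congr hvol, lintegral_measure_forall_notMem_pi unif unif (measurableSet_covers1 hf),
    Fintype.card_fin]
  rfl

theorem exists_threshold_of_mem_Omega1 {f : ℝ → ℝ} (hf : f ∈ Omega1) :
    ∃ t ∈ Icc (0 : ℝ) 1, (∀ x ∈ Icc (0 : ℝ) 1, x < t → f x = -1) ∧
      (∀ x ∈ Icc (0 : ℝ) 1, t < x → f x = 1) := by
  obtain ⟨hmono, hvals⟩ := hf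
  set S := {x ∈ Icc (0 : ℝ) 1 | f x = -1}
  have hbdd : BddAbove S := ⟨1, fun x hx => hx.1.2⟩
  refine ⟨sSup S, ⟨Real.sSup_nonneg fun x hx => hx.1.1, Real.sSup_le (fun x hx => hx.1.2)
    zero_le_one⟩, fun x hx hxt => ?_, fun x hx htx => ?_⟩
  · have hS : S.Nonempty := by
      by_contra hS
      rw [not_nonempty_iff_eq_empty.1 hS, Real.sSup_empty] at hxt
      exact hxt.not_ge hx.1
    obtain ⟨y, hy, hxy⟩ := exists_lt_of_lt_csSup hS hxt
    have hfxy := hmono hx hy.1 hxy.le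
    rw [hy.2] at hfxy
    rcases hvals x hx with h | h
    · exact h
    · linarith
  · exact (hvals x hx).resolve_left fun h => htx.not_ge (le_csSup hbdd ⟨hx, h⟩)

theorem unif_covers1_of_threshold {f : ℝ → ℝ} {s t : ℝ} (hs : s ∈ Icc (0 : ℝ) 1)
    (ht : t ∈ Icc (0 : ℝ) 1) (hlt : ∀ x ∈ Icc (0 : ℝ) 1, x < t → f x = -1)
    (hgt : ∀ x ∈ Icc (0 : ℝ) 1, t < x → f x = 1) :
    unif {x | Covers1 f x s} = ENNReal.ofReal |s - t| := by
  rw [unif, Measure.restrict_apply' measurableSet_Icc]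
  apply le_antisymm
  · calc volume ({x | Covers1 f x s} ∩ Icc 0 1) ≤ volume (uIcc s t) := by
          refine measure_mono fun x ⟨hcov, hx⟩ => ?_
          rcases lt_trichotomy x t with hxt | rfl | htx
          · have hsx : s ≤ x := by
              rcases hcov with ⟨-, h⟩ | ⟨h, -⟩
              · exact h
              · norm_num [hlt x hx hxt] at h
            exact Icc_subset_uIcc ⟨hsx, hxt.le⟩
          · exact right_mem_uIcc
          · have hxs : x ≤ s := by
              rcases hcov with ⟨h, -⟩ | ⟨-, h⟩
              · norm_num [hgt x hx htx] at h
              · exact h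
            exact Icc_subset_uIcc' ⟨htx.le, hxs⟩
      _ = ENNReal.ofReal |s - t| := by rw [Real.volume_interval, abs_sub_comm]
  · calc ENNReal.ofReal |s - t| = volume (uIoo s t) := by
          rw [uIoo, Real.volume_Ioo, ← max_sub_min_eq_abs']
      _ ≤ volume ({x | Covers1 f x s} ∩ Icc 0 1) := by
          refine measure_mono fun x hx => ?_
          rcases le_total s t with hst | hts
          · rw [uIoo_of_le hst] at hx
            have hx01 : x ∈ Icc (0 : ℝ) 1 := ⟨hs.1.trans hx.1.le, hx.2.le.trans ht.2⟩
            exact ⟨Or.inl ⟨hlt x hx01 hx.2, hx.1.le⟩, hx01⟩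
          · rw [uIoo_of_ge hts] at hx
            have hx01 : x ∈ Icc (0 : ℝ) 1 := ⟨ht.1.trans hx.1.le, hx.2.le.trans hs.2⟩
            exact ⟨Or.inr ⟨hgt x hx01 hx.1, hx.2.le⟩, hx01⟩

/-- `∫₀¹ (1 - |s - t|)ⁿ ds`, the expected uncertain volume for the classifier with threshold `t`. -/
noncomputable def thresholdUncertainVolume (n : ℕ) (t : ℝ) : ℝ :=
  (2 - t ^ (n + 1) - (1 - t) ^ (n + 1)) / (n + 1)

open intervalIntegral in
theorem integral_one_sub_abs_sub_pow (n : ℕ) {t : ℝ} (ht : t ∈ Icc (0 : ℝ) 1) :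
    ∫ s in (0 : ℝ)..1, (1 - |s - t|) ^ n = thresholdUncertainVolume n t := by
  have hint : ∀ a b : ℝ, IntervalIntegrable (fun s => (1 - |s - t|) ^ n) volume a b :=
    fun a b => (by fun_prop : Continuous fun s : ℝ => (1 - |s - t|) ^ n).intervalIntegrable a b
  have hleft : ∫ s in (0 : ℝ)..t, (1 - |s - t|) ^ n = (1 - (1 - t) ^ (n + 1)) / (n + 1) := by
    rw [integral_congr (g := fun s => (s + (1 - t)) ^ n) fun s hs => ?_,
      integral_comp_add_right (fun x => x ^ n), integral_pow]
    · norm_num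
    · rw [uIcc_of_le ht.1] at hs
      simp only [abs_of_nonpos (sub_nonpos.2 hs.2)]
      ring
  have hright : ∫ s in t..(1 : ℝ), (1 - |s - t|) ^ n = (1 - t ^ (n + 1)) / (n + 1) := by
    rw [integral_congr (g := fun s => ((1 + t) - s) ^ n) fun s hs => ?_,
      integral_comp_sub_left (fun x => x ^ n), integral_pow]
    · norm_num
    · rw [uIcc_of_le ht.2] at hs
      simp only [abs_of_nonneg (sub_nonneg.2 hs.1)]
      ring
  rw [← integral_add_adjacent_intervals (hint 0 t) (hint t 1), hleft, hright,
    thresholdUncertainVolume]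
  ring

theorem thresholdUncertainVolume_le_half (n : ℕ) {t : ℝ} (ht : t ∈ Icc (0 : ℝ) 1) :
    thresholdUncertainVolume n t ≤ thresholdUncertainVolume n (1 / 2) := by
  have hconv := (convexOn_pow (n + 1)).2 (show t ∈ Ici (0 : ℝ) from ht.1)
    (show 1 - t ∈ Ici (0 : ℝ) from sub_nonneg.2 ht.2) (by norm_num : (0 : ℝ) ≤ 1 / 2)
    (by norm_num : (0 : ℝ) ≤ 1 / 2) (by norm_num)
  simp only [smul_eq_mul, show 1 / 2 * t + 1 / 2 * (1 - t) = (1 / 2 : ℝ) by ring] at hconv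
  unfold thresholdUncertainVolume
  exact div_le_div_of_nonneg_right (by linarith) (by positivity)

theorem thresholdUncertainVolume_half (n : ℕ) :
    thresholdUncertainVolume n (1 / 2) = (2 - (2 : ℝ) ^ (-(n : ℤ))) / (n + 1) := by
  rw [thresholdUncertainVolume, zpow_neg, zpow_natCast, ← inv_pow]
  ring

theorem lintegral_volume_uncertainRegion1_of_threshold {f : ℝ → ℝ} (hf : Measurable f)
    (n : ℕ) {t : ℝ} (ht : t ∈ Icc (0 : ℝ) 1) (hlt : ∀ x ∈ Icc (0 : ℝ) 1, x < t → f x = -1)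
    (hgt : ∀ x ∈ Icc (0 : ℝ) 1, t < x → f x = 1) :
    ∫⁻ ω : Fin n → ℝ, volume (uncertainRegion1 (range ω) f) ∂(Measure.pi fun _ => unif)
      = ENNReal.ofReal (thresholdUncertainVolume n t) := by
  have hnonneg : ∀ s ∈ Icc (0 : ℝ) 1, 0 ≤ 1 - |s - t| := fun s hs => by
    rw [sub_nonneg, abs_le]
    constructor <;> linarith [hs.1, hs.2, ht.1, ht.2]
  have hslice : ∀ s ∈ Icc (0 : ℝ) 1,
      unif {x | ¬ Covers1 f x s} ^ n = ENNReal.ofReal ((1 - |s - t|) ^ n) := fun s hs => by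
    have hmeas : MeasurableSet {x | Covers1 f x s} :=
      (measurableSet_covers1 hf).preimage measurable_prodMk_right
    rw [← compl_ofPred, prob_compl_eq_one_sub hmeas, unif_covers1_of_threshold hs ht hlt hgt,
      ← ENNReal.ofReal_one, ← ENNReal.ofReal_sub _ (abs_nonneg _),
      ENNReal.ofReal_pow (hnonneg s hs)]
  calc ∫⁻ ω : Fin n → ℝ, volume (uncertainRegion1 (range ω) f) ∂(Measure.pi fun _ => unif)
      = ∫⁻ s in Icc 0 1, ENNReal.ofReal ((1 - |s - t|) ^ n) := by
        rw [lintegral_volume_uncertainRegion1 hf, unif]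
        exact setLIntegral_congr_fun measurableSet_Icc hslice
    _ = ENNReal.ofReal (∫ s in Icc 0 1, (1 - |s - t|) ^ n) := by
        refine (ofReal_integral_eq_lintegral_ofReal ?_ ?_).symm
        · exact (by fun_prop : Continuous fun s : ℝ => (1 - |s - t|) ^ n).integrableOn_Icc
        · filter_upwards [ae_restrict_mem measurableSet_Icc] with s hs
          exact pow_nonneg (hnonneg s hs) n
    _ = ENNReal.ofReal (thresholdUncertainVolume n t) := by
        rw [integral_Icc_eq_integral_Ioc, ← intervalIntegral.integral_of_le zero_le_one,
          integral_one_sub_abs_sub_pow n ht]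

theorem ite_lt_mem_Omega1 (t : ℝ) : (fun x : ℝ => if x < t then (-1 : ℝ) else 1) ∈ Omega1 := by
  refine ⟨fun x _ y _ hxy => ?_, fun x _ => ?_⟩ <;> dsimp only <;> split_ifs <;> norm_num
  linarith

theorem lintegral_volume_uncertainRegion1_le_of_mem_Omega1 {f : ℝ → ℝ} (hf : f ∈ Omega1)
    (n : ℕ) :
    ∫⁻ ω : Fin n → ℝ, volume (uncertainRegion1 (range ω) f) ∂(Measure.pi fun _ => unif)
      ≤ ENNReal.ofReal (thresholdUncertainVolume n (1 / 2)) := by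
  obtain ⟨t, ht, hlt, hgt⟩ := exists_threshold_of_mem_Omega1 hf
  -- `g` leaves the threshold point itself unlabelled, so it settles no more than `f` does.
  set g : ℝ → ℝ := fun x => if x < t then -1 else if t < x then 1 else 0
  have hg : Measurable g :=
    Measurable.ite measurableSet_Iio measurable_const
      (Measurable.ite measurableSet_Ioi measurable_const measurable_const)
  have hg_lt : ∀ x, x < t → g x = -1 := fun x hx => if_pos hx
  have hg_gt : ∀ x, t < x → g x = 1 := fun x hx => by simp [g, hx, hx.not_gt]
  have hsamples : ∀ᵐ ω ∂(Measure.pi fun _ : Fin n => unif), ∀ i, ω i ∈ Icc (0 : ℝ) 1 :=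
    ae_all_iff.2 fun i => Measure.tendsto_eval_ae_ae.eventually (ae_restrict_mem measurableSet_Icc)
  have hsubset : ∀ ω : Fin n → ℝ, (∀ i, ω i ∈ Icc (0 : ℝ) 1) →
      uncertainRegion1 (range ω) f ⊆ uncertainRegion1 (range ω) g := by
    rintro ω hω
    refine uncertainRegion1_subset ?_ ?_ <;> rintro _ ⟨i, rfl⟩ hgi
    · refine hlt _ (hω i) (lt_of_not_ge fun hti => ?_)
      rcases hti.lt_or_eq with hti | rfl
      · norm_num [hg_gt _ hti] at hgi
      · simp [g] at hgi
    · refine hgt _ (hω i) (lt_of_not_ge fun hit => ?_)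
      rcases hit.lt_or_eq with hit | hit
      · norm_num [hg_lt _ hit] at hgi
      · simp [g, hit] at hgi
  calc ∫⁻ ω : Fin n → ℝ, volume (uncertainRegion1 (range ω) f) ∂(Measure.pi fun _ => unif)
      ≤ ∫⁻ ω : Fin n → ℝ, volume (uncertainRegion1 (range ω) g) ∂(Measure.pi fun _ => unif) :=
        lintegral_mono_ae (hsamples.mono fun ω hω => measure_mono (hsubset ω hω))
    _ = ENNReal.ofReal (thresholdUncertainVolume n t) :=
        lintegral_volume_uncertainRegion1_of_threshold hg n ht (fun x _ => hg_lt x)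
          (fun x _ => hg_gt x)
    _ ≤ ENNReal.ofReal (thresholdUncertainVolume n (1 / 2)) :=
        ENNReal.ofReal_le_ofReal (thresholdUncertainVolume_le_half n ht)

theorem monte_carlo_expected_uncertain_volume_general (n : ℕ) :
    (⨆ f ∈ Omega1,
        ∫⁻ ω : Fin n → ℝ, volume (uncertainRegion1 (Set.range ω) f)
          ∂(Measure.pi fun _ => unif))
      = ENNReal.ofReal ((2 - (2 : ℝ) ^ (-(n : ℤ))) / (n + 1)) ∧
    (∫⁻ ω : Fin n → ℝ,
        volume (uncertainRegion1 (Set.range ω)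
          (fun x => if x < 1 / 2 then (-1 : ℝ) else 1))
        ∂(Measure.pi fun _ => unif))
      = ENNReal.ofReal ((2 - (2 : ℝ) ^ (-(n : ℤ))) / (n + 1)) := by
  rw [← thresholdUncertainVolume_half]
  have hstar := lintegral_volume_uncertainRegion1_of_threshold
    (f := fun x => if x < 1 / 2 then (-1 : ℝ) else 1)
    (Measurable.ite measurableSet_Iio measurable_const measurable_const) n
    (t := 1 / 2) ⟨by norm_num, by norm_num⟩ (fun x _ hx => if_pos hx)
    (fun x _ hx => if_neg hx.not_gt)
  refine ⟨le_antisymm ?_ ?_, hstar⟩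
  · exact iSup₂_le fun f hf => lintegral_volume_uncertainRegion1_le_of_mem_Omega1 hf n
  · exact hstar.symm.le.trans (le_biSup (fun f => ∫⁻ ω : Fin n → ℝ,
      volume (uncertainRegion1 (range ω) f) ∂(Measure.pi fun _ => unif)) (ite_lt_mem_Omega1 _))

/-- Theorem 5, case `p = 1`: for `n` i.i.d. uniform points on `[0,1]`,
`sup_{f ∈ Ω} E[V(U({X₁,…,Xₙ}, f))] = (2 - 2^(-n))/(n+1)`, attained by the monotone
function which is `-1` exactly on `[0, 1/2)`. -/
theorem monte_carlo_expected_uncertain_volume (n : ℕ) (hn : 1 ≤ n) :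
    (⨆ f ∈ Omega1,
        ∫⁻ ω : Fin n → ℝ, volume (uncertainRegion1 (Set.range ω) f)
          ∂(Measure.pi fun _ => unif))
      = ENNReal.ofReal ((2 - (2 : ℝ) ^ (-(n : ℤ))) / (n + 1)) ∧
    (∫⁻ ω : Fin n → ℝ,
        volume (uncertainRegion1 (Set.range ω)
          (fun x => if x < 1 / 2 then (-1 : ℝ) else 1))
        ∂(Measure.pi fun _ => unif))
      = ENNReal.ofReal ((2 - (2 : ℝ) ^ (-(n : ℤ))) / (n + 1)) :=
  monte_carlo_expected_uncertain_volume_general n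
end

section
/- Let p ≥ 1 and m ≥ 1 be integers and let D_SI(m) = {i/(m+1) : i = 1, …, m}^p be the static inner grid design with m^p points. Then for every monotone function f ∈ Ω, V(U(D_SI(m), f)) = 1 − m^p/(m+1)^p; in particular the volume of the uncertain region does not depend on f. -/
open MeasureTheory Set

/-- The static inner grid design `D_SI(m) = {i/(m+1) : i = 1, …, m}^p`. -/
def staticInnerGrid (p m : ℕ) : Set (Fin p → ℝ) :=
  {x | ∀ k, ∃ i : ℕ, 1 ≤ i ∧ i ≤ m ∧ x k = (i : ℝ) / ((m : ℝ) + 1)}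

/-! Cut the cube into the `(m+1)^p` open cells of side `1/(m+1)` cornered on the grid
`{i/(m+1)}`. Up to the null cell boundaries, `U` is the union of the cells that are not
covered, either by the box below a design point where `f = -1` or by the box above a design
point where `f = 1`. Sending a design point to the cell just above it if `f = 1` there and
just below it if `f = -1` is, by monotonicity of `f`, a bijection onto the covered cells; so
exactly `m^p` cells are covered and `(m+1)^p - m^p` are not, whatever `f` is. -/

lemma OmegaSet.eq_one_of_le {p : ℕ} {f : (Fin p → ℝ) → ℝ} (hf : f ∈ OmegaSet p)
    {x y : Fin p → ℝ}
    (hx : x ∈ Icc 0 1) (hy : y ∈ Icc 0 1) (hxy : x ≤ y) (hfx : f x = 1) : f y = 1 :=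
  (hf.2 y hy).resolve_left fun hfy => by linarith [hf.1 hx hy hxy]

lemma OmegaSet.eq_neg_one_of_le {p : ℕ} {f : (Fin p → ℝ) → ℝ} (hf : f ∈ OmegaSet p)
    {x y : Fin p → ℝ}
    (hx : x ∈ Icc 0 1) (hy : y ∈ Icc 0 1) (hxy : x ≤ y) (hfy : f y = -1) : f x = -1 :=
  (hf.2 x hx).resolve_right fun hfx => by linarith [hf.1 hx hy hxy]

namespace StaticInnerGrid

open scoped Classical

variable {p : ℕ}

noncomputable def gridPoint (c : ℝ) (i : Fin p → ℕ) : Fin p → ℝ := fun k => i k / c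

def cell (c : ℝ) (a : Fin p → ℕ) : Set (Fin p → ℝ) :=
  univ.pi fun k => Ioo (a k / c) ((a k + 1) / c)

lemma measurableSet_cell (c : ℝ) (a : Fin p → ℕ) : MeasurableSet (cell c a) :=
  .univ_pi fun _ => measurableSet_Ioo

lemma volume_cell (c : ℝ) (a : Fin p → ℕ) :
    volume (cell c a) = ENNReal.ofReal c⁻¹ ^ p := by
  simp only [cell, volume_pi_pi, Real.volume_Ioo, add_div, add_sub_cancel_left, one_div,
    Finset.prod_const, Finset.card_univ, Fintype.card_fin]

lemma lt_of_mem_cell_of_le {c : ℝ} (hc : 0 < c) {a i : Fin p → ℕ} {y : Fin p → ℝ}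
    (hy : y ∈ cell c a) (hyi : y ≤ gridPoint c i) (k : Fin p) : a k < i k := by
  have := (hy k trivial).1.trans_le (hyi k)
  exact_mod_cast (div_lt_div_iff_of_pos_right hc).1 this

lemma le_of_mem_cell_of_ge {c : ℝ} (hc : 0 < c) {a i : Fin p → ℕ} {y : Fin p → ℝ}
    (hy : y ∈ cell c a) (hiy : gridPoint c i ≤ y) (k : Fin p) : i k ≤ a k := by
  have := (hiy k).trans_lt (hy k trivial).2
  exact Nat.lt_succ_iff.1 (by exact_mod_cast (div_lt_div_iff_of_pos_right hc).1 this)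

open Function in
lemma pairwise_disjoint_cell {c : ℝ} (hc : 0 < c) :
    Pairwise (Disjoint on (cell c : (Fin p → ℕ) → Set (Fin p → ℝ))) := by
  intro a b hab
  obtain ⟨k, hk⟩ := Function.ne_iff.1 hab
  refine Set.disjoint_left.2 fun y hya hyb => hk ?_
  have hab : (a k : ℝ) < b k + 1 := (div_lt_div_iff_of_pos_right hc).1
    ((hya k trivial).1.trans (hyb k trivial).2)
  have hba : (b k : ℝ) < a k + 1 := (div_lt_div_iff_of_pos_right hc).1
    ((hyb k trivial).1.trans (hya k trivial).2)
  norm_cast at hab hba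
  omega

lemma volume_biUnion_cell {c : ℝ} (hc : 0 < c) (s : Finset (Fin p → ℕ)) :
    volume (⋃ a ∈ s, cell c a) = ENNReal.ofReal (s.card / c ^ p) := by
  rw [measure_biUnion_finset (fun a _ b _ hab => pairwise_disjoint_cell hc hab)
    (fun a _ => measurableSet_cell c a)]
  simp only [volume_cell, Finset.sum_const, nsmul_eq_mul]
  rw [← ENNReal.ofReal_pow (inv_nonneg.2 hc.le), ← ENNReal.ofReal_natCast,
    ← ENNReal.ofReal_mul (by positivity), inv_pow, div_eq_mul_inv]

lemma gridPoint_mono {c : ℝ} (hc : 0 ≤ c) : Monotone (gridPoint (p := p) c) :=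
  fun _ _ hij k => div_le_div_of_nonneg_right (Nat.cast_le.2 (hij k)) hc

lemma gridPoint_nonneg {c : ℝ} (hc : 0 ≤ c) (i : Fin p → ℕ) : 0 ≤ gridPoint c i :=
  fun _ => div_nonneg (Nat.cast_nonneg _) hc

lemma gridPoint_mem_Icc {c : ℝ} (hc : 0 < c) {i : Fin p → ℕ} (hi : ∀ k, (i k : ℝ) ≤ c) :
    gridPoint c i ∈ Icc 0 1 :=
  ⟨gridPoint_nonneg hc.le i, fun k => (div_le_one hc).2 (hi k)⟩

lemma cell_subset_Icc_gridPoint (c : ℝ) (a : Fin p → ℕ) :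
    cell c a ⊆ Icc (gridPoint c a) (gridPoint c (a + 1)) :=
  fun _ hy => ⟨fun k => (hy k trivial).1.le,
    fun k => by simpa [gridPoint] using (hy k trivial).2.le⟩

variable {m : ℕ} {f : (Fin p → ℝ) → ℝ}

def cellIndices (p m : ℕ) : Finset (Fin p → ℕ) :=
  Fintype.piFinset fun _ => Finset.range (m + 1)

def gridIndices (p m : ℕ) : Finset (Fin p → ℕ) := Fintype.piFinset fun _ => Finset.Icc 1 m

lemma mem_cellIndices {a : Fin p → ℕ} : a ∈ cellIndices p m ↔ ∀ k, a k ≤ m := by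
  simp [cellIndices]

lemma card_cellIndices : (cellIndices p m).card = (m + 1) ^ p := by
  simp [cellIndices]

lemma mem_gridIndices {i : Fin p → ℕ} :
    i ∈ gridIndices p m ↔ ∀ k, 1 ≤ i k ∧ i k ≤ m := by
  simp [gridIndices]

lemma mem_staticInnerGrid_iff {x : Fin p → ℝ} :
    x ∈ staticInnerGrid p m ↔ ∃ i ∈ gridIndices p m, gridPoint (m + 1) i = x := by
  simp only [staticInnerGrid, mem_gridIndices, mem_ofPred_eq]
  constructor
  · intro hx
    choose i hi using hx
    exact ⟨i, fun k => ⟨(hi k).1, (hi k).2.1⟩, funext fun k => ((hi k).2.2).symm⟩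
  · rintro ⟨i, hi, rfl⟩ k
    exact ⟨i k, (hi k).1, (hi k).2, rfl⟩

lemma gridPoint_mem_Icc_of_le {i : Fin p → ℕ} (hi : ∀ k, i k ≤ m + 1) :
    gridPoint (m + 1) i ∈ Icc 0 1 :=
  gridPoint_mem_Icc (by positivity) fun k => by exact_mod_cast hi k

lemma cell_subset_Icc {a : Fin p → ℕ} (ha : a ∈ cellIndices p m) :
    cell (m + 1) a ⊆ Icc 0 1 :=
  (cell_subset_Icc_gridPoint _ a).trans <| Icc_subset_Icc
    (gridPoint_mem_Icc_of_le fun k => (mem_cellIndices.1 ha k).trans m.le_succ).1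
    (gridPoint_mem_Icc_of_le fun k => Nat.succ_le_succ (mem_cellIndices.1 ha k)).2

def IsClassified (m : ℕ) (f : (Fin p → ℝ) → ℝ) (a : Fin p → ℕ) : Prop :=
  a + 1 ∈ gridIndices p m ∧ f (gridPoint (m + 1) (a + 1)) = -1 ∨
    a ∈ gridIndices p m ∧ f (gridPoint (m + 1) a) = 1

lemma gridPoint_mem_Icc_of_mem_gridIndices {i : Fin p → ℕ} (hi : i ∈ gridIndices p m) :
    gridPoint (m + 1) i ∈ Icc 0 1 :=
  gridPoint_mem_Icc_of_le fun k => ((mem_gridIndices.1 hi k).2).trans m.le_succ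

noncomputable def classifiedCell (m : ℕ) (f : (Fin p → ℝ) → ℝ) (i : Fin p → ℕ) :
    Fin p → ℕ :=
  if f (gridPoint (m + 1) i) = 1 then i else i - 1

lemma injOn_classifiedCell (hf : f ∈ OmegaSet p) :
    Set.InjOn (classifiedCell m f) (gridIndices p m) := by
  intro i hi j hj hij
  have hmono : ∀ {i j : Fin p → ℕ}, i ∈ gridIndices p m → j ∈ gridIndices p m → i = j - 1 →
      f (gridPoint (m + 1) i) = 1 → f (gridPoint (m + 1) j) = 1 := by
    rintro i j hi hj rfl hfi
    exact OmegaSet.eq_one_of_le hf (gridPoint_mem_Icc_of_mem_gridIndices hi)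
      (gridPoint_mem_Icc_of_mem_gridIndices hj)
      (gridPoint_mono (by positivity) tsub_le_self) hfi
  by_cases hfi : f (gridPoint (m + 1) i) = 1 <;> by_cases hfj : f (gridPoint (m + 1) j) = 1 <;>
    simp only [classifiedCell, hfi, hfj, if_true, if_false] at hij
  · exact hij
  · exact absurd (hmono hi hj hij hfi) hfj
  · exact absurd (hmono hj hi hij.symm hfj) hfi
  · funext k
    have := congrFun hij k
    simp only [Pi.sub_apply, Pi.one_apply] at this
    have := (mem_gridIndices.1 hi k).1
    have := (mem_gridIndices.1 hj k).1
    omega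

lemma image_classifiedCell (hf : f ∈ OmegaSet p) :
    (gridIndices p m).image (classifiedCell m f) =
      (cellIndices p m).filter (IsClassified m f) := by
  ext a
  simp only [Finset.mem_image, Finset.mem_filter]
  constructor
  · rintro ⟨i, hi, rfl⟩
    have hbounds := mem_gridIndices.1 hi
    by_cases hfi : f (gridPoint (m + 1) i) = 1
    · rw [classifiedCell, if_pos hfi]
      exact ⟨mem_cellIndices.2 fun k => (hbounds k).2, .inr ⟨hi, hfi⟩⟩
    · have hi' : i - 1 + 1 = i := funext fun k => Nat.sub_add_cancel (hbounds k).1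
      have hfi' := (hf.2 _ (gridPoint_mem_Icc_of_mem_gridIndices hi)).resolve_right hfi
      rw [classifiedCell, if_neg hfi]
      refine ⟨mem_cellIndices.2 fun k => ?_, .inl ⟨hi'.symm ▸ hi, hi'.symm ▸ hfi'⟩⟩
      have := hbounds k
      simp only [Pi.sub_apply, Pi.one_apply]
      omega
  · rintro ⟨-, ⟨hi, hfi⟩ | ⟨hi, hfi⟩⟩
    · exact ⟨a + 1, hi, by norm_num [classifiedCell, hfi]⟩
    · exact ⟨a, hi, by simp [classifiedCell, hfi]⟩

lemma card_filter_isClassified (hf : f ∈ OmegaSet p) :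
    ((cellIndices p m).filter (IsClassified m f)).card = m ^ p := by
  rw [← image_classifiedCell hf, Finset.card_image_of_injOn (injOn_classifiedCell hf),
    gridIndices, Fintype.card_piFinset]
  simp

lemma card_filter_not_isClassified (hf : f ∈ OmegaSet p) :
    (((cellIndices p m).filter (¬ IsClassified m f ·)).card : ℝ) =
      ((m : ℝ) + 1) ^ p - m ^ p := by
  have hsum := Finset.card_filter_add_card_filter_not (s := cellIndices p m) (IsClassified m f)
  rw [card_filter_isClassified hf, card_cellIndices] at hsum
  rw [eq_sub_iff_add_eq, add_comm]
  exact_mod_cast hsum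

lemma cell_subset_uncertainRegion (hf : f ∈ OmegaSet p) {a : Fin p → ℕ}
    (ha : a ∈ cellIndices p m) (hna : ¬ IsClassified m f a) :
    cell (m + 1) a ⊆ uncertainRegion p (staticInnerGrid p m) f := by
  intro y hy
  refine ⟨cell_subset_Icc ha hy, ?_⟩
  simp only [mem_union, mem_iUnion₂, mem_sep_iff, exists_prop]
  rintro (⟨x, ⟨hxD, hfx⟩, hyx⟩ | ⟨x, ⟨hxD, hfx⟩, hxy⟩)
  · obtain ⟨i, hi, rfl⟩ := mem_staticInnerGrid_iff.1 hxD
    have hai : a + 1 ≤ i := lt_of_mem_cell_of_le (by positivity) hy hyx.2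
    have hmem : a + 1 ∈ gridIndices p m :=
      mem_gridIndices.2 fun k => ⟨Nat.succ_pos _, (hai k).trans (mem_gridIndices.1 hi k).2⟩
    exact hna <| .inl ⟨hmem, OmegaSet.eq_neg_one_of_le hf
      (gridPoint_mem_Icc_of_mem_gridIndices hmem) (gridPoint_mem_Icc_of_mem_gridIndices hi)
      (gridPoint_mono (by positivity) hai) hfx⟩
  · obtain ⟨i, hi, rfl⟩ := mem_staticInnerGrid_iff.1 hxD
    have hia : i ≤ a := le_of_mem_cell_of_ge (by positivity) hy hxy.1
    have hmem : a ∈ gridIndices p m :=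
      mem_gridIndices.2 fun k =>
        ⟨(mem_gridIndices.1 hi k).1.trans (hia k), mem_cellIndices.1 ha k⟩
    exact hna <| .inr ⟨hmem, OmegaSet.eq_one_of_le hf
      (gridPoint_mem_Icc_of_mem_gridIndices hi) (gridPoint_mem_Icc_of_mem_gridIndices hmem)
      (gridPoint_mono (by positivity) hia) hfx⟩

lemma disjoint_cell_uncertainRegion {a : Fin p → ℕ} (ha : IsClassified m f a) :
    Disjoint (cell (m + 1) a) (uncertainRegion p (staticInnerGrid p m) f) := by
  refine Set.disjoint_left.2 fun y hy hyU => hyU.2 ?_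
  have hcell := cell_subset_Icc_gridPoint _ a hy
  rcases ha with ⟨hi, hfi⟩ | ⟨hi, hfi⟩
  · refine .inl (mem_biUnion ⟨mem_staticInnerGrid_iff.2 ⟨_, hi, rfl⟩, hfi⟩ ⟨?_, hcell.2⟩)
    exact (gridPoint_nonneg (by positivity) a).trans hcell.1
  · refine .inr (mem_biUnion ⟨mem_staticInnerGrid_iff.2 ⟨_, hi, rfl⟩, hfi⟩ ⟨hcell.1, ?_⟩)
    exact hcell.2.trans
      (gridPoint_mem_Icc_of_le fun k => Nat.succ_le_succ (mem_gridIndices.1 hi k).2).2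

lemma volume_uncertainRegion (hf : f ∈ OmegaSet p) :
    volume (uncertainRegion p (staticInnerGrid p m) f) =
      ENNReal.ofReal
        (((cellIndices p m).filter (¬ IsClassified m f ·)).card / ((m : ℝ) + 1) ^ p) := by
  set U := uncertainRegion p (staticInnerGrid p m) f
  set classified := (cellIndices p m).filter (IsClassified m f)
  set unclassified := (cellIndices p m).filter (¬ IsClassified m f ·)
  have hc : (0 : ℝ) < m + 1 := by positivity
  have hU_lower : (⋃ a ∈ unclassified, cell (m + 1) a) ⊆ U := iUnion₂_subset fun a ha =>
    cell_subset_uncertainRegion hf (Finset.mem_filter.1 ha).1 (Finset.mem_filter.1 ha).2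
  have hU_upper : U ⊆ Icc 0 1 \ ⋃ a ∈ classified, cell (m + 1) a := fun y hy =>
    ⟨hy.1, by
      simp only [mem_iUnion₂, not_exists]
      exact fun a ha hya =>
        Set.disjoint_left.1 (disjoint_cell_uncertainRegion (Finset.mem_filter.1 ha).2) hya hy⟩
  have hclassified : (⋃ a ∈ classified, cell (m + 1) a) ⊆ Icc 0 1 :=
    iUnion₂_subset fun a ha => cell_subset_Icc (Finset.mem_filter.1 ha).1
  have hcard : (unclassified.card : ℝ) + classified.card = ((m : ℝ) + 1) ^ p :=
    mod_cast (add_comm _ _).trans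
      ((Finset.card_filter_add_card_filter_not _).trans card_cellIndices)
  refine le_antisymm ?_ ((volume_biUnion_cell hc _).symm.trans_le (measure_mono hU_lower))
  calc volume U ≤ volume (Icc 0 1 \ ⋃ a ∈ classified, cell (m + 1) a) := measure_mono hU_upper
    _ = 1 - ENNReal.ofReal (classified.card / ((m : ℝ) + 1) ^ p) := by
      rw [measure_sdiff hclassified (Finset.measurableSet_biUnion _ fun a _ =>
        measurableSet_cell _ a).nullMeasurableSet (by simp [volume_biUnion_cell hc]),
        volume_biUnion_cell hc, Real.volume_Icc_pi]
      simp
    _ = _ := by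
      rw [← ENNReal.ofReal_one, ← ENNReal.ofReal_sub _ (by positivity)]
      congr 1
      field_simp
      linarith

end StaticInnerGrid

theorem staticInnerGrid_uncertain_volume_general (p m : ℕ)
    (f : (Fin p → ℝ) → ℝ) (hf : f ∈ OmegaSet p) :
    volume (uncertainRegion p (staticInnerGrid p m) f)
      = ENNReal.ofReal (1 - (m : ℝ) ^ p / ((m : ℝ) + 1) ^ p) := by
  rw [StaticInnerGrid.volume_uncertainRegion hf, StaticInnerGrid.card_filter_not_isClassified hf,
    sub_div, div_self (by positivity)]

/-- Theorem (static inner grid): for every monotone `f`, the uncertain volume of the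
static inner grid design equals `1 - m^p/(m+1)^p`, independently of `f`. -/
theorem staticInnerGrid_uncertain_volume (p m : ℕ) (hp : 1 ≤ p) (hm : 1 ≤ m)
    (f : (Fin p → ℝ) → ℝ) (hf : f ∈ OmegaSet p) :
    volume (uncertainRegion p (staticInnerGrid p m) f)
      = ENNReal.ofReal (1 - (m : ℝ) ^ p / ((m : ℝ) + 1) ^ p) :=
  staticInnerGrid_uncertain_volume_general p m f hf
end

section
/- Let p = 1, let X_1, X_2, … be independent random points uniformly distributed on [0,1], and let f̃ ∈ Ω be defined by f̃(x) = −1 if x < 1/2 and f̃(x) = 1 otherwise. For n ≥ 1 define the adaptive Monte Carlo evaluation count M_n = card{ i ∈ {1,…,n} : X_i ∈ U({X_1,…,X_{i−1}}, f̃) }. Then lim_{n→∞} ( E[M_n] − 2·ln n ) = 2·(γ − ln 2), where γ is the Euler–Mascheroni constant. -/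
/-!
A point `s` already evaluated settles the label of `t` exactly when `s` lies between `t` and
`1/2`, so for `t ∈ [0,1]` a uniform point leaves `t` unsettled with probability `1 - |t - 1/2|`.
Conditioning on `X_i = t` and using independence, `X_i` is evaluated with probability
`∫₀¹ (1 - |t - 1/2|)^(i-1) dt = 2 (1 - 2^{-i}) / i`.
Summing, `E[M_n] = 2 H_n - 2 ∑_{k ≤ n} 2^{-k}/k`, where `H_n - ln n → γ` and
`∑_k 2^{-k}/k = ln 2`.
-/

open MeasureTheory Set Filter

instance isProbabilityMeasure_unif : IsProbabilityMeasure unif := ⟨by simp [unif]⟩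

section PiMeasure

open scoped Finset

variable {α : Type*} [MeasurableSpace α] {n : ℕ} {T : Set α} {R : Set (α × α)}

theorem measurableSet_setOf_mem_forall_lt (i : Fin n) (hT : MeasurableSet T)
    (hR : MeasurableSet R) :
    MeasurableSet {ω : Fin n → α | ω i ∈ T ∧ ∀ j < i, (ω i, ω j) ∈ R} := by
  simp only [measurableSet_setOfPred]
  fun_prop

theorem measure_pi_setOf_mem_forall_lt (μ : Measure α) [IsProbabilityMeasure μ] (i : Fin n)
    (hT : MeasurableSet T) (hR : MeasurableSet R) :
    Measure.pi (fun _ => μ) {ω | ω i ∈ T ∧ ∀ j < i, (ω i, ω j) ∈ R}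
      = ∫⁻ t in T, μ (Prod.mk t ⁻¹' R) ^ (i : ℕ) ∂μ := by
  rcases n with _ | m
  · exact i.elim0
  set E : Set (α × (Fin m → α)) :=
    {p | p.1 ∈ T ∧ ∀ k : Fin m, k.castSucc < i → (p.1, p.2 k) ∈ R}
  have hE : MeasurableSet E := by
    simp only [E, measurableSet_setOfPred]
    fun_prop
  have hpre : {ω : Fin (m + 1) → α | ω i ∈ T ∧ ∀ j < i, (ω i, ω j) ∈ R}
      = MeasurableEquiv.piFinSuccAbove (fun _ => α) i ⁻¹' E := by
    ext ω
    simp [E, i.forall_iff_succAbove, Fin.succAbove_lt_iff_castSucc_lt, Fin.removeNth]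
  have hcard : #{k : Fin m | k.castSucc < i} = (i : ℕ) := by
    simp only [Fin.lt_def, Fin.val_castSucc, Fin.card_filter_val_lt]
    omega
  have hslice (t : α) : Measure.pi (fun _ : Fin m => μ) (Prod.mk t ⁻¹' E)
      = T.indicator (fun t => μ (Prod.mk t ⁻¹' R) ^ (i : ℕ)) t := by
    by_cases ht : t ∈ T
    · have hbox : Prod.mk t ⁻¹' E
          = univ.pi fun k => if k.castSucc < i then Prod.mk t ⁻¹' R else univ := by
        ext y
        simp [E, ht]
      rw [hbox, Measure.pi_pi, indicator_of_mem ht]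
      simp [apply_ite μ, Finset.prod_ite, hcard]
    · simp [E, ht]
  rw [hpre, (measurePreserving_piFinSuccAbove (fun _ => μ) i).measure_preimage
      hE.nullMeasurableSet, Measure.prod_apply hE, ← lintegral_indicator hT]
  simp_rw [hslice]

end PiMeasure

theorem mem_uncertainRegion1_iff {D : Set ℝ} {f : ℝ → ℝ} {x : ℝ} :
    x ∈ uncertainRegion1 D f ↔
      x ∈ Icc 0 1 ∧ ∀ y ∈ D, (f y = -1 → y < x) ∧ (f y = 1 → x < y) := by
  simp only [uncertainRegion1, Set.mem_sdiff, mem_union, mem_iUnion, mem_ofPred_eq, mem_Icc,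
    exists_prop]
  constructor
  · rintro ⟨⟨h0, h1⟩, hx⟩
    refine ⟨⟨h0, h1⟩, fun y hy => ⟨fun hf => ?_, fun hf => ?_⟩⟩ <;> by_contra! h
    exacts [hx (Or.inl ⟨y, ⟨hy, hf⟩, h0, h⟩), hx (Or.inr ⟨y, ⟨hy, hf⟩, h, h1⟩)]
  · rintro ⟨hx, hD⟩
    refine ⟨hx, ?_⟩
    rintro (⟨y, ⟨hy, hf⟩, -, h⟩ | ⟨y, ⟨hy, hf⟩, h, -⟩)
    · exact ((hD y hy).1 hf).not_ge h
    · exact ((hD y hy).2 hf).not_ge h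

/-- `(t, s) ∈ unsettledPairs` iff evaluating `f̃` at `s` does not settle the label of `t`. -/
def unsettledPairs : Set (ℝ × ℝ) :=
  {p | (p.2 < 1 / 2 → p.2 < p.1) ∧ (1 / 2 ≤ p.2 → p.1 < p.2)}

theorem measurableSet_unsettledPairs : MeasurableSet unsettledPairs := by
  simp only [unsettledPairs, measurableSet_setOfPred]
  fun_prop

theorem mem_uncertainRegion1_earlier_iff {n : ℕ} (ω : Fin n → ℝ) (i : Fin n) :
    ω i ∈ uncertainRegion1 {x | ∃ j : Fin n, j < i ∧ ω j = x}
        (fun x => if x < 1 / 2 then (-1 : ℝ) else 1) ↔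
      ω i ∈ Icc 0 1 ∧ ∀ j < i, (ω i, ω j) ∈ unsettledPairs := by
  rw [mem_uncertainRegion1_iff]
  norm_num [unsettledPairs]

theorem unif_prodMk_preimage_unsettledPairs {t : ℝ} (ht : t ∈ Icc (0 : ℝ) 1) :
    unif (Prod.mk t ⁻¹' unsettledPairs) = ENNReal.ofReal (1 - |t - 1 / 2|) := by
  obtain ⟨h0, h1⟩ := ht
  rw [← compl_compl (Prod.mk t ⁻¹' _),
    prob_compl_eq_one_sub (measurable_prodMk_left measurableSet_unsettledPairs).compl,
    ENNReal.ofReal_sub 1 (abs_nonneg (t - 1 / 2)), ENNReal.ofReal_one]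
  rcases lt_or_ge t (1 / 2) with h | h
  · have hsettling : (Prod.mk t ⁻¹' unsettledPairs)ᶜ = Ico t (1 / 2) := by
      ext s
      simp only [mem_compl_iff, mem_preimage, unsettledPairs, mem_ofPred_eq, mem_Ico]
      grind
    rw [hsettling, unif, Measure.restrict_eq_self _ (Ico_subset_Icc_self.trans
      (Icc_subset_Icc h0 (by norm_num))), Real.volume_Ico, abs_of_neg (by linarith), neg_sub]
  · have hsettling : (Prod.mk t ⁻¹' unsettledPairs)ᶜ = Icc (1 / 2) t := by
      ext s
      simp only [mem_compl_iff, mem_preimage, unsettledPairs, mem_ofPred_eq, mem_Icc]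
      grind
    rw [hsettling, unif, Measure.restrict_eq_self _ (Icc_subset_Icc (by norm_num) h1),
      Real.volume_Icc, abs_of_nonneg (by linarith)]

theorem integral_one_sub_abs_sub_half_pow (k : ℕ) :
    ∫ t in (0 : ℝ)..1, (1 - |t - 1 / 2|) ^ k = 2 * (1 - (1 / 2) ^ (k + 1)) / (k + 1) := by
  have hcont : Continuous fun t : ℝ => (1 - |t - 1 / 2|) ^ k := by fun_prop
  have hleft : ∫ t in (0 : ℝ)..1 / 2, (1 - |t - 1 / 2|) ^ k
      = ∫ t in (0 : ℝ)..1 / 2, (1 / 2 + t) ^ k := by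
    refine intervalIntegral.integral_congr fun t ht => ?_
    rw [uIcc_of_le (by norm_num)] at ht
    simp only [abs_of_nonpos (by linarith [ht.2] : t - 1 / 2 ≤ 0)]
    ring
  have hright : ∫ t in (1 / 2 : ℝ)..1, (1 - |t - 1 / 2|) ^ k
      = ∫ t in (1 / 2 : ℝ)..1, (3 / 2 - t) ^ k := by
    refine intervalIntegral.integral_congr fun t ht => ?_
    rw [uIcc_of_le (by norm_num)] at ht
    simp only [abs_of_nonneg (by linarith [ht.1] : 0 ≤ t - 1 / 2)]
    ring
  rw [← intervalIntegral.integral_add_adjacent_intervals (b := 1 / 2)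
      (hcont.intervalIntegrable _ _) (hcont.intervalIntegrable _ _), hleft, hright,
    intervalIntegral.integral_comp_add_left (fun u => u ^ k),
    intervalIntegral.integral_comp_sub_left (fun u => u ^ k), integral_pow]
  norm_num
  ring

theorem measureReal_pi_unif_unsettled {n : ℕ} (i : Fin n) :
    (Measure.pi fun _ => unif).real
        {ω | ω i ∈ Icc 0 1 ∧ ∀ j < i, (ω i, ω j) ∈ unsettledPairs}
      = 2 * (1 - (1 / 2) ^ ((i : ℕ) + 1)) / ((i : ℕ) + 1) := by
  have hrestrict : unif.restrict (Icc 0 1) = volume.restrict (Icc 0 1) := by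
    rw [unif, Measure.restrict_restrict measurableSet_Icc, inter_self]
  have hnonneg (t : ℝ) (ht : t ∈ Icc (0 : ℝ) 1) : 0 ≤ 1 - |t - 1 / 2| := by
    rw [sub_nonneg, abs_le]
    constructor <;> linarith [ht.1, ht.2]
  have hint : IntegrableOn (fun t : ℝ => (1 - |t - 1 / 2|) ^ (i : ℕ)) (Icc 0 1) :=
    (by fun_prop : Continuous fun t : ℝ => (1 - |t - 1 / 2|) ^ (i : ℕ)).integrableOn_Icc
  rw [measureReal_def, measure_pi_setOf_mem_forall_lt unif i measurableSet_Icc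
      measurableSet_unsettledPairs, hrestrict,
    setLIntegral_congr_fun measurableSet_Icc fun t ht => by
      rw [unif_prodMk_preimage_unsettledPairs ht, ← ENNReal.ofReal_pow (hnonneg t ht)],
    ← ofReal_integral_eq_lintegral_ofReal hint
      (ae_restrict_of_forall_mem measurableSet_Icc fun t ht => pow_nonneg (hnonneg t ht) _),
    integral_Icc_eq_integral_Ioc, ← intervalIntegral.integral_of_le zero_le_one,
    integral_one_sub_abs_sub_half_pow, ENNReal.toReal_ofReal (div_nonneg (mul_nonneg zero_le_two
      (sub_nonneg.2 (pow_le_one₀ (by norm_num) (by norm_num)))) (by positivity))]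

theorem integral_ncard_uncertain_eq_sum (n : ℕ) :
    ∫ ω : Fin n → ℝ,
        (({i : Fin n | ω i ∈ uncertainRegion1 {x | ∃ j : Fin n, j < i ∧ ω j = x}
            (fun x => if x < 1 / 2 then (-1 : ℝ) else 1)}).ncard : ℝ)
        ∂(Measure.pi fun _ => unif)
      = ∑ k ∈ Finset.range n, 2 * (1 - (1 / 2 : ℝ) ^ (k + 1)) / (k + 1) := by
  set E : Fin n → Set (Fin n → ℝ) :=
    fun i => {ω | ω i ∈ Icc 0 1 ∧ ∀ j < i, (ω i, ω j) ∈ unsettledPairs}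
  have hE (i : Fin n) : MeasurableSet (E i) :=
    measurableSet_setOf_mem_forall_lt i measurableSet_Icc measurableSet_unsettledPairs
  have hcount (ω : Fin n → ℝ) :
      (({i : Fin n | ω i ∈ uncertainRegion1 {x | ∃ j : Fin n, j < i ∧ ω j = x}
          (fun x => if x < 1 / 2 then (-1 : ℝ) else 1)}).ncard : ℝ)
        = ∑ i, (E i).indicator 1 ω := by
    classical
    simp only [mem_uncertainRegion1_earlier_iff]
    rw [Set.ncard_eq_toFinset_card']
    simp [E, indicator_apply, Finset.sum_boole]
  simp_rw [hcount]
  rw [integral_finsetSum _ fun i _ => (integrable_const 1).indicator (hE i)]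
  simp_rw [integral_indicator_one (hE _), E, measureReal_pi_unif_unsettled]
  exact Fin.sum_univ_eq_sum_range (fun k => 2 * (1 - (1 / 2 : ℝ) ^ (k + 1)) / (k + 1)) n

theorem tendsto_sum_two_mul_one_sub_half_pow_div_sub_two_mul_log :
    Tendsto (fun n : ℕ => ∑ k ∈ Finset.range n, 2 * (1 - (1 / 2 : ℝ) ^ (k + 1)) / (k + 1)
        - 2 * Real.log n) atTop (nhds (2 * (Real.eulerMascheroniConstant - Real.log 2))) := by
  have hharmonic :
      Tendsto (fun n : ℕ => ∑ k ∈ Finset.range n, 1 / ((k : ℝ) + 1) - Real.log n) atTop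
        (nhds Real.eulerMascheroniConstant) := by
    simpa [harmonic] using Real.tendsto_harmonic_sub_log
  have hlog : Tendsto (fun n : ℕ => ∑ k ∈ Finset.range n, (1 / 2 : ℝ) ^ (k + 1) / (k + 1))
      atTop (nhds (Real.log 2)) := by
    have := (Real.hasSum_pow_div_log_of_abs_lt_one (x := 1 / 2)
      (by norm_num [abs_of_pos])).tendsto_sum_nat
    rwa [show (1 : ℝ) - 1 / 2 = 2⁻¹ by norm_num, Real.log_inv, neg_neg] at this
  refine ((hharmonic.sub hlog).const_mul 2).congr fun n => ?_
  have hterm (k : ℕ) : 2 * (1 - (1 / 2 : ℝ) ^ (k + 1)) / (k + 1)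
      = 2 * (1 / ((k : ℝ) + 1)) - 2 * ((1 / 2) ^ (k + 1) / (k + 1)) := by ring
  simp only [hterm, Finset.sum_sub_distrib, ← Finset.mul_sum]
  ring

/-- Theorem 6, case `p = 1`: for i.i.d. uniform points and `f̃ = -1` iff `x < 1/2`,
the expected adaptive Monte Carlo evaluation count
`M_n = card{i ≤ n : X_i ∈ U({X_1,…,X_{i-1}}, f̃)}` satisfies
`lim_{n→∞} (E[M_n] - 2 ln n) = 2 (γ - ln 2)`. -/
theorem adaptive_monte_carlo_eval_count_dim_one :
    Tendsto (fun n : ℕ =>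
        (∫ ω : Fin n → ℝ,
          (({i : Fin n | ω i ∈ uncertainRegion1 {x | ∃ j : Fin n, j < i ∧ ω j = x}
              (fun x => if x < 1 / 2 then (-1 : ℝ) else 1)}).ncard : ℝ)
          ∂(Measure.pi fun _ => unif))
        - 2 * Real.log n)
      atTop (nhds (2 * (Real.eulerMascheroniConstant - Real.log 2))) := by
  simp_rw [integral_ncard_uncertain_eq_sum]
  exact tendsto_sum_two_mul_one_sub_half_pow_div_sub_two_mul_log
end

section
/- Let p ≥ 2 be an integer, let D ⊆ [0,1]^p be a finite design, and let v > 0 satisfy sup_{f ∈ Ω} V(U(D, f)) ≤ v. Let d be a real number with (p−1)!·v ≤ d and d + (p−1)!·v ≤ 1 (so in particular 0 < d < 1 − (p−1)!·v). Then card{ x ∈ D : d − (p−1)!·v < Σ_{k=1}^p x_k < d + (p−1)!·v } ≥ ( (d + (p−1)!·v)^p − (d − (p−1)!·v)^p − v·p! ) / ( (p−1)!·v )^p. -/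
/-!
Test the design against the threshold function `f = sign (∑ x - d)`, which is monotone. Outside
the uncertain region of `f`, a point `y` of the slab `d - c < ∑ y < d + c`, `c = (p-1)! v`, is
certified by a design point `x` with `y ≤ x`, `f x = -1` or with `x ≤ y`, `f x = 1`. Either way
`x` lies in the slab too and `y` lies in the corner simplex of size `c` at `x`, whose volume is
`c ^ p / p!`. The slab meets the cube in volume at least `((d+c)^p - (d-c)^p) / p!`, the volume
between two such simplices at the origin, so `N` design points in the slab must satisfy
`((d+c)^p - (d-c)^p) / p! ≤ v + N c^p / p!`.
-/

open MeasureTheory Set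

open scoped Pointwise Nat

def cornerSimplex (n : ℕ) (t : ℝ) : Set (Fin n → ℝ) :=
  {x | 0 ≤ x ∧ ∑ i, x i ≤ t}

lemma cornerSimplex_eq_empty {n : ℕ} {t : ℝ} (ht : t < 0) : cornerSimplex n t = ∅ :=
  eq_empty_of_forall_notMem fun _ ⟨hx, hsum⟩ =>
    (Finset.sum_nonneg fun i _ => hx i).not_gt (hsum.trans_lt ht)

lemma cornerSimplex_succ (n : ℕ) (t : ℝ) :
    cornerSimplex (n + 1) t = MeasurableEquiv.piFinSuccAbove (fun _ => ℝ) 0 ⁻¹'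
      {q | 0 ≤ q.1 ∧ q.2 ∈ cornerSimplex n (t - q.1)} := by
  ext x
  simp [cornerSimplex, Fin.sum_univ_succ, Pi.le_def, Fin.forall_fin_succ, le_sub_iff_add_le',
    and_assoc, Fin.tail]

lemma lintegral_Icc_ofReal_sub_pow_div_factorial (n : ℕ) {t : ℝ} (ht : 0 ≤ t) :
    ∫⁻ a in Icc 0 t, ENNReal.ofReal ((t - a) ^ n / n !) =
      ENNReal.ofReal (t ^ (n + 1) / (n + 1)!) := by
  rw [← ofReal_integral_eq_lintegral_ofReal, integral_Icc_eq_integral_Ioc,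
    ← intervalIntegral.integral_of_le ht, intervalIntegral.integral_div,
    intervalIntegral.integral_comp_sub_left (fun x => x ^ n) t]
  · simp [integral_pow, Nat.factorial_succ]
    field_simp
  · exact (by fun_prop : Continuous fun a : ℝ => (t - a) ^ n / n !).integrableOn_Icc
  · refine (ae_restrict_iff' measurableSet_Icc).mpr (.of_forall fun a ha => ?_)
    have : 0 ≤ t - a := sub_nonneg.mpr ha.2
    positivity

theorem volume_cornerSimplex (n : ℕ) {t : ℝ} (ht : 0 ≤ t) :
    volume (cornerSimplex n t) = ENNReal.ofReal (t ^ n / n !) := by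
  induction n generalizing t with
  | zero => simp [cornerSimplex, ht, volume_pi, Measure.pi_empty_univ]
  | succ n ih =>
    set T : Set (ℝ × (Fin n → ℝ)) := {q | 0 ≤ q.1 ∧ q.2 ∈ cornerSimplex n (t - q.1)}
    have hT : MeasurableSet T :=
      (measurableSet_le measurable_const measurable_fst).inter
        ((measurableSet_le measurable_const measurable_snd).inter
          (measurableSet_le (Finset.measurable_sum _ fun i _ => (measurable_pi_apply i).comp
            measurable_snd) (measurable_const.sub measurable_fst)))
    have hsection : ∀ a, volume (Prod.mk a ⁻¹' T) =
        (Icc 0 t).indicator (fun a => ENNReal.ofReal ((t - a) ^ n / n !)) a := by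
      intro a
      by_cases ha : a ∈ Icc 0 t
      · rw [indicator_of_mem ha, ← ih (sub_nonneg.mpr ha.2)]
        simp [T, ha.1]
      · rw [indicator_of_notMem ha]
        rcases lt_or_ge a 0 with ha0 | ha0
        · simp [T, ha0.not_ge]
        · have hta : t < a := lt_of_not_ge fun h => ha ⟨ha0, h⟩
          simp [T, cornerSimplex_eq_empty (sub_neg.mpr hta)]
    rw [cornerSimplex_succ, (volume_preserving_piFinSuccAbove (fun _ => ℝ) 0).measure_preimage
      hT.nullMeasurableSet, Measure.volume_eq_prod, Measure.prod_apply hT, funext hsection,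
      lintegral_indicator measurableSet_Icc, lintegral_Icc_ofReal_sub_pow_div_factorial n ht]

lemma volume_setOf_sum_eq {ι : Type*} [Fintype ι] [Nonempty ι] (t : ℝ) :
    volume {y : ι → ℝ | ∑ i, y i = t} = 0 := by
  let L : (ι → ℝ) →ᵃ[ℝ] ℝ := (∑ i, LinearMap.proj i : (ι → ℝ) →ₗ[ℝ] ℝ).toAffineMap
  let H := AffineSubspace.comap L (AffineSubspace.mk' t ⊥)
  have hH : (H : Set (ι → ℝ)) = {y | ∑ i, y i = t} := by
    ext y
    simp [H, L, AffineSubspace.mem_mk', sub_eq_zero]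
  rw [← hH]
  refine Measure.addHaar_affineSubspace _ H fun htop => ?_
  classical
  obtain ⟨i⟩ := ‹Nonempty ι›
  have : Pi.single i (t + 1) ∈ H := htop ▸ AffineSubspace.mem_top ℝ _ _
  simp [H, L, AffineSubspace.mem_mk'] at this

noncomputable def sumThreshold (p : ℕ) (d : ℝ) (x : Fin p → ℝ) : ℝ :=
  if d ≤ ∑ k, x k then 1 else -1

lemma sumThreshold_mem_OmegaSet (p : ℕ) (d : ℝ) : sumThreshold p d ∈ OmegaSet p := by
  refine ⟨fun x _ y _ hxy => ?_, fun x _ => ?_⟩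
  · have hsum : ∑ k, x k ≤ ∑ k, y k := Finset.sum_le_sum fun k _ => hxy k
    unfold sumThreshold
    split_ifs <;> linarith
  · unfold sumThreshold
    split_ifs <;> simp

lemma exists_certificate_of_notMem_uncertainRegion {p : ℕ} {D : Set (Fin p → ℝ)}
    {f : (Fin p → ℝ) → ℝ} {y : Fin p → ℝ} (hy : y ∈ Icc 0 1)
    (hU : y ∉ uncertainRegion p D f) :
    ∃ x ∈ D, (f x = -1 ∧ y ≤ x) ∨ (f x = 1 ∧ x ≤ y) := by
  simp only [uncertainRegion, mem_sdiff, hy, true_and, not_not, mem_union, mem_iUnion₂,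
    mem_ofPred_eq, mem_Icc, exists_prop] at hU
  rcases hU with ⟨x, ⟨hxD, hfx⟩, -, hyx⟩ | ⟨x, ⟨hxD, hfx⟩, hxy, -⟩
  · exact ⟨x, hxD, .inl ⟨hfx, hyx⟩⟩
  · exact ⟨x, hxD, .inr ⟨hfx, hxy⟩⟩

lemma volume_vadd_sumThreshold_smul (p : ℕ) (d : ℝ) (x : Fin p → ℝ) (S : Set (Fin p → ℝ)) :
    volume (x +ᵥ sumThreshold p d x • S) = volume S := by
  rw [measure_vadd, Measure.addHaar_smul]
  unfold sumThreshold
  split_ifs <;> simp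

/-- As `sumThreshold p d x = ±1`, the cell `x +ᵥ sumThreshold p d x • cornerSimplex p c` is the
corner simplex at `x` that points into the region where `x` certifies the value of the threshold. -/
lemma slab_subset_uncertainRegion_union (p : ℕ) (D : Finset (Fin p → ℝ)) (d c : ℝ) :
    Icc 0 1 ∩ {y | d - c < ∑ k, y k ∧ ∑ k, y k < d + c} ⊆
      uncertainRegion p D (sumThreshold p d) ∪
        ⋃ x ∈ D.filter (fun x => d - c < ∑ k, x k ∧ ∑ k, x k < d + c),
          x +ᵥ sumThreshold p d x • cornerSimplex p c := by
  rintro y ⟨hy, hlo, hhi⟩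
  by_cases hU : y ∈ uncertainRegion p D (sumThreshold p d)
  · exact .inl hU
  obtain ⟨x, hxD, ⟨hfx, hyx⟩ | ⟨hfx, hxy⟩⟩ := exists_certificate_of_notMem_uncertainRegion hy hU
  · have hxd : ∑ k, x k < d := by
      by_contra h
      norm_num [sumThreshold, not_lt.mp h] at hfx
    have hsum : ∑ k, y k ≤ ∑ k, x k := Finset.sum_le_sum fun k _ => hyx k
    refine .inr (mem_iUnion₂.mpr ⟨x, Finset.mem_filter.mpr ⟨hxD, by linarith, by linarith⟩, ?_⟩)
    rw [hfx, neg_smul_set, one_smul, mem_vadd_set_iff_neg_vadd_mem, mem_neg, vadd_eq_add,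
      neg_add_eq_sub, neg_sub]
    refine ⟨sub_nonneg.mpr hyx, ?_⟩
    simp only [Pi.sub_apply, Finset.sum_sub_distrib]
    linarith
  · have hxd : d ≤ ∑ k, x k := by
      by_contra h
      norm_num [sumThreshold, h] at hfx
    have hsum : ∑ k, x k ≤ ∑ k, y k := Finset.sum_le_sum fun k _ => hxy k
    refine .inr (mem_iUnion₂.mpr ⟨x, Finset.mem_filter.mpr ⟨hxD, by linarith, by linarith⟩, ?_⟩)
    rw [hfx, one_smul, mem_vadd_set_iff_neg_vadd_mem, vadd_eq_add, neg_add_eq_sub]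
    refine ⟨sub_nonneg.mpr hxy, ?_⟩
    simp only [Pi.sub_apply, Finset.sum_sub_distrib]
    linarith

lemma volume_slab_le (p : ℕ) (D : Finset (Fin p → ℝ)) (d c : ℝ) :
    volume (Icc 0 1 ∩ {y : Fin p → ℝ | d - c < ∑ k, y k ∧ ∑ k, y k < d + c}) ≤
      volume (uncertainRegion p D (sumThreshold p d)) +
        (D.filter fun x => d - c < ∑ k, x k ∧ ∑ k, x k < d + c).card *
          volume (cornerSimplex p c) := by
  calc _ ≤ _ := measure_mono (slab_subset_uncertainRegion_union p D d c)
    _ ≤ _ := measure_union_le _ _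
    _ ≤ _ := add_le_add_right (measure_biUnion_finset_le _ _) _
    _ = _ := by simp only [volume_vadd_sumThreshold_smul, Finset.sum_const, nsmul_eq_mul]

lemma volume_cornerSimplex_le_volume_slab_add {n : ℕ} (hn : n ≠ 0) {s t : ℝ} (ht : t ≤ 1) :
    volume (cornerSimplex n t) ≤
      volume (Icc 0 1 ∩ {y : Fin n → ℝ | s < ∑ k, y k ∧ ∑ k, y k < t}) +
        volume (cornerSimplex n s) := by
  have : Nonempty (Fin n) := ⟨⟨0, Nat.pos_of_ne_zero hn⟩⟩
  have hsub : cornerSimplex n t ⊆ (Icc 0 1 ∩ {y | s < ∑ k, y k ∧ ∑ k, y k < t}) ∪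
      cornerSimplex n s ∪ {y | ∑ k, y k = t} := by
    rintro y ⟨hy0, hyt⟩
    rcases le_or_gt (∑ k, y k) s with hys | hys
    · exact .inl (.inr ⟨hy0, hys⟩)
    rcases hyt.lt_or_eq with hyt | hyt
    · have hy1 : y ≤ 1 := fun i =>
        ((Finset.single_le_sum (fun j _ => hy0 j) (Finset.mem_univ i)).trans hyt.le).trans ht
      exact .inl (.inl ⟨⟨hy0, hy1⟩, hys, hyt⟩)
    · exact .inr hyt
  calc _ ≤ _ := measure_mono hsub
    _ ≤ _ := measure_union_le _ _
    _ = volume (Icc 0 1 ∩ {y : Fin n → ℝ | s < ∑ k, y k ∧ ∑ k, y k < t} ∪ cornerSimplex n s) := by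
      rw [volume_setOf_sum_eq, add_zero]
    _ ≤ _ := measure_union_le _ _

lemma pow_sub_pow_le_of_volume_uncertainRegion_le {p : ℕ} (hp : p ≠ 0) (D : Finset (Fin p → ℝ))
    {v c d : ℝ} (hv : 0 ≤ v) (hc : 0 ≤ c) (hcd : c ≤ d) (hd : d + c ≤ 1)
    (hU : volume (uncertainRegion p D (sumThreshold p d)) ≤ ENNReal.ofReal v) :
    (d + c) ^ p - (d - c) ^ p ≤
      v * p ! + (D.filter fun x => d - c < ∑ k, x k ∧ ∑ k, x k < d + c).card * c ^ p := by
  set N := (D.filter fun x => d - c < ∑ k, x k ∧ ∑ k, x k < d + c).card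
  have hvol : ENNReal.ofReal ((d + c) ^ p / p !) ≤
      ENNReal.ofReal (v + N * (c ^ p / p !) + (d - c) ^ p / p !) :=
    calc _ = volume (cornerSimplex p (d + c)) := (volume_cornerSimplex p (by linarith)).symm
      _ ≤ volume (Icc 0 1 ∩ {y : Fin p → ℝ | d - c < ∑ k, y k ∧ ∑ k, y k < d + c}) +
            volume (cornerSimplex p (d - c)) :=
          volume_cornerSimplex_le_volume_slab_add hp hd
      _ ≤ ENNReal.ofReal v + N * volume (cornerSimplex p c) +
            volume (cornerSimplex p (d - c)) := by
          gcongr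
          exact (volume_slab_le p D d c).trans (add_le_add_left hU _)
      _ = _ := by
          rw [volume_cornerSimplex p hc, volume_cornerSimplex p (by linarith),
            ENNReal.ofReal_add (by positivity) (by positivity),
            ENNReal.ofReal_add hv (by positivity), ENNReal.ofReal_mul (by positivity),
            ENNReal.ofReal_natCast]
  rw [ENNReal.ofReal_le_ofReal_iff (by positivity)] at hvol
  have hfact : (0 : ℝ) < p ! := by positivity
  have hscaled := mul_le_mul_of_nonneg_right hvol hfact.le
  rw [add_mul, add_mul, mul_assoc, div_mul_cancel₀ _ hfact.ne', div_mul_cancel₀ _ hfact.ne',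
    div_mul_cancel₀ _ hfact.ne'] at hscaled
  linarith

theorem design_slab_card_lower_bound_general (p : ℕ) (hp : 2 ≤ p) (D : Finset (Fin p → ℝ))
    (v : ℝ) (hv : 0 < v)
    (hsup : ∀ f ∈ OmegaSet p, volume (uncertainRegion p ↑D f) ≤ ENNReal.ofReal v)
    (d : ℝ) (hd1 : ((p - 1).factorial : ℝ) * v ≤ d)
    (hd2 : d + ((p - 1).factorial : ℝ) * v ≤ 1) :
    ((d + ((p - 1).factorial : ℝ) * v) ^ p - (d - ((p - 1).factorial : ℝ) * v) ^ p
        - v * (p.factorial : ℝ)) / (((p - 1).factorial : ℝ) * v) ^ p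
      ≤ (({x ∈ (D : Set (Fin p → ℝ)) |
            d - ((p - 1).factorial : ℝ) * v < ∑ k, x k ∧
              ∑ k, x k < d + ((p - 1).factorial : ℝ) * v}).ncard : ℝ) := by
  set c : ℝ := (p - 1)! * v
  have hc : 0 < c := by positivity
  have hcard : ({x ∈ (D : Set (Fin p → ℝ)) | d - c < ∑ k, x k ∧ ∑ k, x k < d + c}).ncard =
      (D.filter fun x => d - c < ∑ k, x k ∧ ∑ k, x k < d + c).card := by
    rw [← ncard_coe_finset, Finset.coe_filter]
    rfl
  rw [hcard, div_le_iff₀ (by positivity)]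
  linarith [pow_sub_pow_le_of_volume_uncertainRegion_le (by omega) D hv.le hc.le hd1 hd2
    (hsup _ (sumThreshold_mem_OmegaSet p d))]

/-- Counting lemma for static designs: if the design certifies every monotone function
to within uncertain volume `v`, then the slab `{d - (p-1)!v < Σ x_k < d + (p-1)!v}`
contains at least `((d+(p-1)!v)^p - (d-(p-1)!v)^p - v p!)/((p-1)!v)^p` design points. -/
theorem design_slab_card_lower_bound (p : ℕ) (hp : 2 ≤ p) (D : Finset (Fin p → ℝ))
    (hD : ↑D ⊆ Icc (0 : Fin p → ℝ) 1) (v : ℝ) (hv : 0 < v)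
    (hsup : ∀ f ∈ OmegaSet p, volume (uncertainRegion p ↑D f) ≤ ENNReal.ofReal v)
    (d : ℝ) (hd1 : ((p - 1).factorial : ℝ) * v ≤ d)
    (hd2 : d + ((p - 1).factorial : ℝ) * v ≤ 1) :
    ((d + ((p - 1).factorial : ℝ) * v) ^ p - (d - ((p - 1).factorial : ℝ) * v) ^ p
        - v * (p.factorial : ℝ)) / (((p - 1).factorial : ℝ) * v) ^ p
      ≤ (({x ∈ (D : Set (Fin p → ℝ)) |
            d - ((p - 1).factorial : ℝ) * v < ∑ k, x k ∧
              ∑ k, x k < d + ((p - 1).factorial : ℝ) * v}).ncard : ℝ) :=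
  design_slab_card_lower_bound_general p hp D v hv hsup d hd1 hd2
end

section
/- Let p ≥ 2 be an integer. Then lim_{n→∞} n^{1/p} · ∫_0^1 (1 − u^p/p!)^n du = (p!)^{1/p} · Γ(1/p) / p, where Γ is the Gamma function. -/
/-!
Substituting `u = (p!/n)^(1/p) t` turns `n^(1/p) ∫₀¹ (1 - u^p/p!)^n du` into
`(p!)^(1/p) ∫₀^{a n} (1 - t^p/n)^n dt` with `a n = (n/p!)^(1/p) → ∞`. As `p! ≥ 1`, `(a n)^p ≤ n`, so
on the range of integration `|(1 - t^p/n)^n| ≤ e^{-t^p}`, while `(1 - t^p/n)^n → e^{-t^p}`.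
Dominated convergence then gives the limit `∫₀^∞ e^{-t^p} dt = Γ(1/p + 1) = Γ(1/p)/p`.
-/

open MeasureTheory Set Filter Real Topology

lemma abs_one_sub_div_pow_le_exp_neg {n : ℕ} {x : ℝ} (hxn : x ≤ n) :
    |(1 - x / n) ^ n| ≤ exp (-x) := by
  have hdiv : x / n ≤ 1 := div_le_one_of_le₀ hxn n.cast_nonneg
  rw [abs_of_nonneg (pow_nonneg (by linarith) n)]
  exact one_sub_div_pow_le_exp_neg hxn

lemma tendsto_one_sub_div_pow_exp_neg (x : ℝ) :
    Tendsto (fun n : ℕ => (1 - x / n) ^ n) atTop (𝓝 (exp (-x))) := by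
  simpa only [neg_div, ← sub_eq_add_neg] using tendsto_one_add_div_pow_exp (-x)

lemma rpow_one_div_natCast_pow {x : ℝ} (hx : 0 ≤ x) {p : ℕ} (hp : p ≠ 0) :
    (x ^ (1 / (p : ℝ))) ^ p = x := by
  rw [one_div, rpow_inv_natCast_pow hx hp]

lemma integrableOn_exp_neg_pow {p : ℕ} (hp : 0 < p) :
    IntegrableOn (fun t : ℝ => exp (-t ^ p)) (Ioi 0) := by
  simpa using integrableOn_rpow_mul_exp_neg_rpow (s := 0) (p := p) (by norm_num) (by positivity)

lemma integral_exp_neg_pow {p : ℕ} (hp : 0 < p) :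
    ∫ t in Ioi (0 : ℝ), exp (-t ^ p) = Gamma (1 / p + 1) := by
  simpa using integral_exp_neg_rpow (p := p) (by positivity)

theorem tendsto_setIntegral_Ioc_one_sub_pow_div_pow {p : ℕ} (hp : 0 < p) {a : ℕ → ℝ}
    (ha : Tendsto a atTop atTop) (han : ∀ n, a n ^ p ≤ n) :
    Tendsto (fun n : ℕ => ∫ t in Ioc 0 (a n), (1 - t ^ p / n) ^ n) atTop
      (𝓝 (Gamma (1 / p + 1))) := by
  have hIoc : ∀ n, ∫ t in Ioc 0 (a n), (1 - t ^ p / n) ^ n =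
      ∫ t in Ioi 0, (Ioc 0 (a n)).indicator (fun t : ℝ => (1 - t ^ p / n) ^ n) t := fun n => by
    rw [setIntegral_indicator measurableSet_Ioc, inter_eq_right.mpr Ioc_subset_Ioi_self]
  simp_rw [hIoc, ← integral_exp_neg_pow hp]
  refine tendsto_integral_of_dominated_convergence _
    (fun n => (Measurable.indicator (by fun_prop) measurableSet_Ioc).aestronglyMeasurable)
    (integrableOn_exp_neg_pow hp) (fun n => ?_) ?_
  · filter_upwards [self_mem_ae_restrict measurableSet_Ioi] with t (ht : 0 < t)
    by_cases hmem : t ∈ Ioc 0 (a n)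
    · rw [indicator_of_mem hmem, norm_eq_abs]
      exact abs_one_sub_div_pow_le_exp_neg
        ((pow_le_pow_left₀ ht.le hmem.2 p).trans (han n))
    · rw [indicator_of_notMem hmem, norm_zero]
      positivity
  · filter_upwards [self_mem_ae_restrict measurableSet_Ioi] with t (ht : 0 < t)
    refine (tendsto_one_sub_div_pow_exp_neg (t ^ p)).congr' ?_
    filter_upwards [ha.eventually_ge_atTop t] with n hn
    rw [indicator_of_mem (show t ∈ Ioc 0 (a n) from ⟨ht, hn⟩)]

lemma integral_one_sub_pow_div_rescale {p n : ℕ} (hp : p ≠ 0) (hn : 0 < n) {c : ℝ} (hc : 0 < c) :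
    ∫ t in (0 : ℝ)..(n / c) ^ (1 / (p : ℝ)), (1 - t ^ p / n) ^ n =
      (n / c) ^ (1 / (p : ℝ)) * ∫ u in (0 : ℝ)..1, (1 - u ^ p / c) ^ n := by
  set b : ℝ := (n / c) ^ (1 / (p : ℝ))
  have hb : 0 < b := by positivity
  have hbp : b ^ p = n / c := rpow_one_div_natCast_pow (by positivity) hp
  have hsub : ∀ t : ℝ, (1 - t ^ p / n) ^ n = (1 - (t / b) ^ p / c) ^ n := fun t => by
    rw [div_pow, hbp]
    field_simp
  simp_rw [hsub]
  rw [intervalIntegral.integral_comp_div (fun u : ℝ => (1 - u ^ p / c) ^ n) hb.ne', zero_div,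
    div_self hb.ne', smul_eq_mul]

/-- Asymptotics of `∫_0^1 (1 - u^p/p!)^n du`:
`lim_{n→∞} n^(1/p) ∫_0^1 (1 - u^p/p!)^n du = (p!)^(1/p) Γ(1/p) / p` for `p ≥ 2`. -/
theorem integral_one_sub_pow_asymptotics (p : ℕ) (hp : 2 ≤ p) :
    Tendsto (fun n : ℕ =>
        (n : ℝ) ^ (1 / (p : ℝ)) *
          ∫ u in Icc (0 : ℝ) 1, (1 - u ^ p / (p.factorial : ℝ)) ^ n)
      atTop
      (nhds ((p.factorial : ℝ) ^ (1 / (p : ℝ)) * Real.Gamma (1 / (p : ℝ)) / (p : ℝ))) := by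
  have hp0 : 0 < p := by omega
  set c : ℝ := (p.factorial : ℝ)
  have hc : 1 ≤ c := Nat.one_le_cast.mpr p.factorial_pos
  set a : ℕ → ℝ := fun n => (n / c) ^ (1 / (p : ℝ))
  have ha : Tendsto a atTop atTop := (tendsto_rpow_atTop (by positivity)).comp
    (tendsto_natCast_atTop_atTop.atTop_div_const (by positivity))
  have han : ∀ n, a n ^ p ≤ n := fun n => by
    rw [rpow_one_div_natCast_pow (by positivity) hp0.ne']
    exact div_le_self n.cast_nonneg hc
  have hrescale : ∀ n : ℕ, 0 < n → c ^ (1 / (p : ℝ)) * ∫ t in Ioc 0 (a n), (1 - t ^ p / n) ^ n =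
      (n : ℝ) ^ (1 / (p : ℝ)) * ∫ u in Icc (0 : ℝ) 1, (1 - u ^ p / c) ^ n := fun n hn => by
    rw [← intervalIntegral.integral_of_le (by positivity),
      integral_one_sub_pow_div_rescale hp0.ne' hn (by positivity), integral_Icc_eq_integral_Ioc,
      ← intervalIntegral.integral_of_le zero_le_one, ← mul_assoc,
      div_rpow n.cast_nonneg (by positivity), mul_div_cancel₀ _ (by positivity)]
  have hlim :=
    (tendsto_setIntegral_Ioc_one_sub_pow_div_pow hp0 ha han).const_mul (c ^ (1 / (p : ℝ)))
  rw [Gamma_add_one (by positivity)] at hlim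
  convert hlim.congr' ((eventually_gt_atTop 0).mono hrescale) using 2
  field_simp
end

section
/- Define g_1(t) = 2^t − 2^t/t + 1/t for t > 0. Then g_1 is strictly increasing on the interval (0,1], and g_1(t) > 1 − ln 2 for every t ∈ (0,1]. -/
/-!
Writing `2^t = exp (a t)` with `a = log 2 ∈ (0, 1]`, the function is `exp (a t) - (exp (a t) - 1) / t`,
whose derivative has numerator `exp (a t) - 1 - a t (1 - t) exp (a t)`. Since `(1 - t) exp (a t) ≤ 1`
for `a ≤ 1`, this numerator is at least `exp (a t) - 1 - a t > 0`. The lower bound is then the limit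
at `0⁺` of an increasing function: the difference quotient `(exp (a t) - 1) / t` tends to `a`.
-/

open Set Real Filter Topology

noncomputable def expSubSlope (a t : ℝ) : ℝ := exp (a * t) - (exp (a * t) - 1) / t

lemma exp_mul_mul_one_sub_le_one {a t : ℝ} (ha : a ≤ 1) (ht : 0 ≤ t) :
    exp (a * t) * (1 - t) ≤ 1 :=
  calc exp (a * t) * (1 - t) ≤ exp (a * t) * exp (-t) := by
        gcongr; exact one_sub_le_exp_neg t
    _ = exp ((a - 1) * t) := by rw [← exp_add]; ring_nf
    _ ≤ 1 := exp_le_one_iff.mpr (mul_nonpos_of_nonpos_of_nonneg (by linarith) ht)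

lemma hasDerivAt_expSubSlope (a : ℝ) {t : ℝ} (ht : t ≠ 0) :
    HasDerivAt (expSubSlope a)
      ((exp (a * t) - 1 - a * t * (1 - t) * exp (a * t)) / t ^ 2) t := by
  have hexp : HasDerivAt (fun s => exp (a * s)) (exp (a * t) * a) t :=
    ((hasDerivAt_id t).const_mul a).exp.congr_deriv (by simp)
  refine (hexp.sub ((hexp.sub_const 1).div (hasDerivAt_id' t) ht)).congr_deriv ?_
  field_simp
  ring

lemma expSubSlope_deriv_numerator_pos {a t : ℝ} (ha₀ : 0 < a) (ha₁ : a ≤ 1) (ht : 0 < t) :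
    0 < exp (a * t) - 1 - a * t * (1 - t) * exp (a * t) := by
  have hconvex : a * t + 1 < exp (a * t) := add_one_lt_exp (by positivity)
  have hbound : a * t * (exp (a * t) * (1 - t)) ≤ a * t :=
    mul_le_of_le_one_right (by positivity) (exp_mul_mul_one_sub_le_one ha₁ ht.le)
  linarith

lemma strictMonoOn_expSubSlope {a : ℝ} (ha₀ : 0 < a) (ha₁ : a ≤ 1) :
    StrictMonoOn (expSubSlope a) (Ioi 0) := by
  refine strictMonoOn_of_deriv_pos (convex_Ioi 0) (fun t ht => ?_) (fun t ht => ?_)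
  · exact (hasDerivAt_expSubSlope a (ne_of_gt ht)).continuousAt.continuousWithinAt
  · rw [interior_Ioi] at ht
    rw [(hasDerivAt_expSubSlope a (ne_of_gt ht)).deriv]
    exact div_pos (expSubSlope_deriv_numerator_pos ha₀ ha₁ ht) (pow_pos ht 2)

lemma tendsto_expSubSlope_nhdsGT_zero (a : ℝ) :
    Tendsto (expSubSlope a) (𝓝[>] 0) (𝓝 (1 - a)) := by
  have hexp : HasDerivAt (fun s => exp (a * s)) a 0 := by
    simpa using ((hasDerivAt_id (0 : ℝ)).const_mul a).exp
  have hslope : Tendsto (fun t => (exp (a * t) - 1) / t) (𝓝[>] 0) (𝓝 a) := by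
    refine ((hasDerivAt_iff_tendsto_slope.mp hexp).mono_left (nhdsGT_le_nhdsNE 0)).congr ?_
    intro t
    simp [slope_def_field]
  have hval : Tendsto (fun t => exp (a * t)) (𝓝[>] 0) (𝓝 1) := by
    simpa using hexp.continuousAt.tendsto.mono_left nhdsWithin_le_nhds
  exact hval.sub hslope

lemma StrictMonoOn.lt_of_tendsto_nhdsGT {f : ℝ → ℝ} {a l t : ℝ}
    (hf : StrictMonoOn f (Ioi a)) (hlim : Tendsto f (𝓝[>] a) (𝓝 l)) (ht : a < t) :
    l < f t := by
  obtain ⟨s, has, hst⟩ := exists_between ht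
  have hle : l ≤ f s := by
    refine le_of_tendsto hlim ?_
    filter_upwards [Ioc_mem_nhdsGT has] with x hx
    exact hf.monotoneOn hx.1 has hx.2
  exact hle.trans_lt (hf has ht hst)

/-- The function `g₁(t) = 2^t - 2^t/t + 1/t` is strictly increasing on `(0,1]`, and
`g₁(t) > 1 - ln 2` for every `t ∈ (0,1]`. -/
theorem g_one_strictMono_and_lower_bound :
    StrictMonoOn (fun t : ℝ => (2 : ℝ) ^ t - (2 : ℝ) ^ t / t + 1 / t) (Ioc (0 : ℝ) 1) ∧
    ∀ t ∈ Ioc (0 : ℝ) 1,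
      1 - Real.log 2 < (2 : ℝ) ^ t - (2 : ℝ) ^ t / t + 1 / t := by
  have hg (t : ℝ) : (2 : ℝ) ^ t - (2 : ℝ) ^ t / t + 1 / t = expSubSlope (log 2) t := by
    rw [expSubSlope, rpow_def_of_pos two_pos, sub_div]
    ring
  have hlog₀ : 0 < log 2 := log_pos one_lt_two
  have hlog₁ : log 2 ≤ 1 := (log_two_lt_d9.trans (by norm_num)).le
  have hmono := strictMonoOn_expSubSlope hlog₀ hlog₁
  simp only [hg]
  exact ⟨hmono.mono Ioc_subset_Ioi_self,
    fun t ht => hmono.lt_of_tendsto_nhdsGT (tendsto_expSubSlope_nhdsGT_zero _) ht.1⟩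
end
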